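/- arXiv:1110.5435 — 12 statements merged into one kernel-verified Lean document; each statement's English description precedes it below -/
import Mathlib

section
/- Let F ⊆ ℕ be a J-set and suppose F = F₁ ∪ F₂. Then F₁ is a J-set or F₂ is a J-set (i.e., the collection of J-sets has the Ramsey property / is a filterdual). -/
open Finset

/-- `F ⊆ ℕ₊` is a J-set: for every `m ∈ ℕ` and every sequence `s : ℕ₊ → ℤ^m`
there exist `r ∈ ℕ₊` and a nonempty finite `α ⊆ ℕ₊` such that
`r + s_α i ∈ F` for every `i ∈ {1,…,m}`, where `s_α = ∑_{n∈α} s n`. -/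
def IsJSet (F : Set ℕ+) : Prop :=
  ∀ (m : ℕ) (s : ℕ+ → Fin m → ℤ),
    ∃ (r : ℕ+) (α : Finset ℕ+), α.Nonempty ∧
      ∀ i : Fin m, ∃ k ∈ F, ((k : ℕ) : ℤ) = ((r : ℕ) : ℤ) + ∑ n ∈ α, s n i

/-- The J-set property for families indexed by an arbitrary finite type. -/
private lemma jset_fintype {F : Set ℕ+} (hF : IsJSet F) {I : Type} [Fintype I]
    (s : ℕ+ → I → ℤ) :
    ∃ (r : ℕ+) (α : Finset ℕ+), α.Nonempty ∧
      ∀ i : I, ∃ k ∈ F, ((k : ℕ) : ℤ) = ((r : ℕ) : ℤ) + ∑ n ∈ α, s n i := by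
  obtain ⟨r, α, hα, h⟩ := hF (Fintype.card I)
    (fun n j => s n ((Fintype.equivFin I).symm j))
  exact ⟨r, α, hα, fun i => by simpa using h (Fintype.equivFin I i)⟩

/-- If `F` is a J-set and `F = F₁ ∪ F₂`, then `F₁` or `F₂` is a J-set
(the collection of J-sets has the Ramsey property / is a filterdual). -/
theorem jset_ramsey (F F₁ F₂ : Set ℕ+) (hF : IsJSet F) (hU : F = F₁ ∪ F₂) :
    IsJSet F₁ ∨ IsJSet F₂ := by
  classical
  by_cases h2 : IsJSet F₂
  · exact Or.inr h2
  left
  unfold IsJSet at h2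
  push_neg at h2
  obtain ⟨k, s₂, hw⟩ := h2
  set h' : ℕ+ → Option (Fin k) → ℤ := fun n j => j.elim 0 (s₂ n) with h'def
  -- the extended witness: for EVERY integer b, some sequence in the family fails for F₂
  have hW : ∀ (b : ℤ) (β : Finset ℕ+), β.Nonempty →
      ∃ j : Option (Fin k), ∀ x ∈ F₂, ((x : ℕ) : ℤ) ≠ b + ∑ n ∈ β, h' n j := by
    intro b β hβ
    rcases le_or_gt b 0 with hb | hb
    · refine ⟨none, fun x _ => ?_⟩
      have h1 : (1 : ℤ) ≤ ((x : ℕ) : ℤ) := by exact_mod_cast x.one_le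
      simp only [h'def, Option.elim_none, Finset.sum_const_zero, add_zero]
      omega
    · obtain ⟨i, hi⟩ := hw ⟨b.toNat, by omega⟩ β hβ
      refine ⟨some i, fun x hx => ?_⟩
      have := hi x hx
      simpa [h'def, Int.toNat_of_nonneg hb.le] using this
  intro m g
  obtain ⟨ι, ιfin, hHJ⟩ :=
    Combinatorics.Line.exists_mono_in_high_dimension (Option (Fin k)) (Fin (m + 1) → Prop)
  haveI := ιfin
  set e : ι ≃ Fin (Fintype.card ι) := Fintype.equivFin ι with edef
  set q : ℕ+ → ι → ℕ+ := fun n t => ⟨Nat.pair (n : ℕ) (e t) + 1, Nat.succ_pos _⟩ with qdef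
  have hq : ∀ n₁ t₁ n₂ t₂, q n₁ t₁ = q n₂ t₂ → n₁ = n₂ ∧ t₁ = t₂ := by
    intro n₁ t₁ n₂ t₂ hqe
    have hp : Nat.pair (n₁ : ℕ) (e t₁) = Nat.pair (n₂ : ℕ) (e t₂) := by
      have := congrArg (fun y : ℕ+ => (y : ℕ)) hqe
      simpa [qdef] using this
    rw [Nat.pair_eq_pair] at hp
    exact ⟨PNat.coe_injective hp.1, e.injective (Fin.val_injective hp.2)⟩
  set g' : ℕ+ → Fin (m + 1) → ℤ := fun n i => if h : (i : ℕ) < m then g n ⟨i, h⟩ else 0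
    with g'def
  obtain ⟨r, α, hα, hmain⟩ := jset_fintype hF
    (fun n (p : Fin (m + 1) × (ι → Option (Fin k))) => g' n p.1 + ∑ t, h' (q n t) (p.2 t))
  set S : ι → Option (Fin k) → ℤ := fun t j => ∑ n ∈ α, h' (q n t) j with Sdef
  set Gg : Fin (m + 1) → ℤ := fun i => ∑ n ∈ α, g' n i with Ggdef
  have hE : ∀ (i : Fin (m + 1)) (w : ι → Option (Fin k)),
      ∃ x ∈ F, ((x : ℕ) : ℤ) = ((r : ℕ) : ℤ) + Gg i + ∑ t, S t (w t) := by
    intro i w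
    obtain ⟨x, hx, hxe⟩ := hmain (i, w)
    refine ⟨x, hx, ?_⟩
    simp only [Ggdef, Sdef]
    rw [hxe, Finset.sum_add_distrib, add_assoc]
    congr 1
    congr 1
    exact Finset.sum_comm
  obtain ⟨l, c, hc⟩ := hHJ
    (fun w i => ∃ y ∈ F₁, ((y : ℕ) : ℤ) = ((r : ℕ) : ℤ) + Gg i + ∑ t, S t (w t))
  by_cases hfull : ∀ i : Fin m, c i.castSucc
  · -- every original index got color "in F₁" on the line: success
    obtain ⟨x, hxF, hx⟩ := hE (Fin.last m) (l none)
    refine ⟨x, α, hα, fun i => ?_⟩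
    have hCi : ∃ y ∈ F₁, ((y : ℕ) : ℤ) =
        ((r : ℕ) : ℤ) + Gg i.castSucc + ∑ t, S t ((l none) t) := by
      have h1 : (∃ y ∈ F₁, ((y : ℕ) : ℤ) =
          ((r : ℕ) : ℤ) + Gg i.castSucc + ∑ t, S t ((l none) t)) = c i.castSucc :=
        congrFun (hc none) i.castSucc
      rw [h1]
      exact hfull i
    obtain ⟨y, hy₁, hy⟩ := hCi
    refine ⟨y, hy₁, ?_⟩
    have hGl : Gg (Fin.last m) = 0 := by
      simp [Ggdef, g'def]
    have hGc : Gg i.castSucc = ∑ n ∈ α, g n i := by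
      refine Finset.sum_congr rfl fun n _ => ?_
      simp [g'def, i.isLt]
    have hx' : ((x : ℕ) : ℤ) = ((r : ℕ) : ℤ) + ∑ t, S t ((l none) t) := by
      rw [hx, hGl]; ring
    rw [hy, hGc, hx']
    ring
  · -- some index i₀ always gets color "not in F₁": contradiction with the witness
    push_neg at hfull
    obtain ⟨i₀, hi₀⟩ := hfull
    exfalso
    set W : Finset ι := Finset.univ.filter (fun t => l.idxFun t = none) with Wdef
    have hWne : W.Nonempty := by
      obtain ⟨t, ht⟩ := l.proper
      exact ⟨t, by simp [Wdef, ht]⟩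
    set β : Finset ℕ+ := (α ×ˢ W).image (fun p => q p.1 p.2) with βdef
    have hβ : β.Nonempty := (hα.product hWne).image _
    set b : ℤ := ((r : ℕ) : ℤ) + Gg i₀.castSucc + ∑ t ∈ Wᶜ, S t ((l none) t) with bdef
    have key : ∀ j : Option (Fin k), ∃ x ∈ F₂, ((x : ℕ) : ℤ) = b + ∑ n ∈ β, h' n j := by
      intro j
      obtain ⟨x, hxF, hx⟩ := hE i₀.castSucc (l j)
      have hnot : ¬ ∃ y ∈ F₁, ((y : ℕ) : ℤ) =
          ((r : ℕ) : ℤ) + Gg i₀.castSucc + ∑ t, S t ((l j) t) := by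
        have h1 : (∃ y ∈ F₁, ((y : ℕ) : ℤ) =
            ((r : ℕ) : ℤ) + Gg i₀.castSucc + ∑ t, S t ((l j) t)) = c i₀.castSucc :=
          congrFun (hc j) i₀.castSucc
        rw [h1]
        exact hi₀
      have hx₂ : x ∈ F₂ := by
        have hx12 : x ∈ F₁ ∪ F₂ := hU ▸ hxF
        rcases hx12 with h | h
        · exact absurd ⟨x, h, hx⟩ hnot
        · exact h
      refine ⟨x, hx₂, ?_⟩
      rw [hx, bdef]
      have hsplit : ∑ t, S t ((l j) t)
          = ∑ t ∈ Wᶜ, S t ((l j) t) + ∑ t ∈ W, S t ((l j) t) :=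
        (Finset.sum_compl_add_sum W _).symm
      have hWc : ∑ t ∈ Wᶜ, S t ((l j) t) = ∑ t ∈ Wᶜ, S t ((l none) t) := by
        refine Finset.sum_congr rfl fun t ht => ?_
        have ht' : l.idxFun t ≠ none := by
          simp only [Wdef, Finset.mem_compl, Finset.mem_filter, Finset.mem_univ,
            true_and] at ht
          exact ht
        obtain ⟨a, ha⟩ := Option.ne_none_iff_exists'.mp ht'
        simp [Combinatorics.Line.coe_apply, ha]
      have hWin : ∑ t ∈ W, S t ((l j) t) = ∑ n ∈ β, h' n j := by
        have hstep : ∑ t ∈ W, S t ((l j) t) = ∑ t ∈ W, ∑ n ∈ α, h' (q n t) j := by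
          refine Finset.sum_congr rfl fun t ht => ?_
          have ht' : l.idxFun t = none := by
            simp only [Wdef, Finset.mem_filter, Finset.mem_univ, true_and] at ht
            exact ht
          simp [Sdef, Combinatorics.Line.coe_apply, ht']
        rw [hstep, βdef, Finset.sum_image, Finset.sum_product]
        · exact Finset.sum_comm
        · intro p hp p' hp' hpp
          obtain ⟨h1', h2'⟩ := hq p.1 p.2 p'.1 p'.2 hpp
          exact Prod.ext h1' h2'
      rw [hsplit, hWc, hWin]
      ring
    obtain ⟨j, hj⟩ := hW b β hβ
    obtain ⟨x, hx₂, hx⟩ := key j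
    exact hj x hx₂ hx
end

section
/- Suppose F ⊆ ℕ has the property that there exists a J-set F′ ⊆ ℕ such that for every finite subset W of F′ there exists m ∈ ℤ₊ with m + W ⊆ F (i.e., F belongs to the block family of the J-sets). Then F is itself a J-set. -/
open Finset

/-- If `F` belongs to the block family of the J-sets (there is a J-set `F'` such that
every finite `W ⊆ F'` has a nonnegative translate `m + W ⊆ F`), then `F` is a J-set. -/
theorem jset_block (F : Set ℕ+)
    (h : ∃ F' : Set ℕ+, IsJSet F' ∧
      ∀ W : Finset ℕ+, ↑W ⊆ F' → ∃ m : ℕ, ∀ w ∈ W, ∃ k ∈ F, (k : ℕ) = m + (w : ℕ)) :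
    IsJSet F := by
  obtain ⟨F', hF', hblock⟩ := h
  intro d s
  obtain ⟨r, α, hα, hr⟩ := hF' d s
  choose k hkF' hk using hr
  -- The finitely many points `r + s_α i` of `F'` have a common translate `t + ·` into `F`.
  obtain ⟨t, ht⟩ := hblock (univ.image k) (by simpa [Set.range_subset_iff] using hkF')
  refine ⟨⟨r + t, by positivity⟩, α, hα, fun i => ?_⟩
  obtain ⟨k', hk'F, hk'⟩ := ht (k i) (mem_image_of_mem k (mem_univ i))
  refine ⟨k', hk'F, ?_⟩
  rw [hk', PNat.mk_coe]
  push_cast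
  rw [hk i]
  ring
end

section
/- If F ⊆ ℕ is a J-set and n ∈ ℕ, then nF = {n·k : k ∈ F} is a J-set. -/
open Finset

/-- If `F` is a J-set and `n ∈ ℕ₊`, then `nF = {n * k : k ∈ F}` is a J-set. -/
theorem jset_mul (F : Set ℕ+) (hF : IsJSet F) (n : ℕ+) :
    IsJSet {m : ℕ+ | ∃ k ∈ F, m = n * k} := by
  intro m s
  haveI : NeZero (n : ℕ) := ⟨n.ne_zero⟩
  set g : ℕ → ℕ+ := fun t => ⟨t + 1, Nat.succ_pos t⟩ with hg
  set P : ℕ → Fin m → ℤ := fun N i => ∑ l ∈ Finset.range N, s (g l) i with hPdef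
  set Q : ℕ → (Fin m → ZMod (n : ℕ)) := fun N i => ((P N i : ℤ) : ZMod (n : ℕ)) with hQdef
  obtain ⟨v, hv⟩ := Finite.exists_infinite_fiber Q
  have hT : Set.Infinite (Q ⁻¹' {v}) := Set.infinite_coe_iff.mp hv
  let f : ℕ → ℕ := fun k =>
    Nat.rec (hT.exists_gt 0).choose (fun _ prev => (hT.exists_gt prev).choose) k
  have hfT : ∀ k, f k ∈ Q ⁻¹' {v} := by
    intro k
    cases k with
    | zero => exact (hT.exists_gt 0).choose_spec.1
    | succ k => exact (hT.exists_gt (f k)).choose_spec.1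
  have hflt : ∀ k, f k < f (k + 1) := fun k => (hT.exists_gt (f k)).choose_spec.2
  have hfmono : StrictMono f := strictMono_nat_of_lt_succ hflt
  have hdvd : ∀ (a b : ℕ) (i : Fin m), ((n : ℕ) : ℤ) ∣ (P (f b) i - P (f a) i) := by
    intro a b i
    have ha : Q (f a) i = v i := congrFun (hfT a) i
    have hb : Q (f b) i = v i := congrFun (hfT b) i
    have : ((P (f b) i - P (f a) i : ℤ) : ZMod (n : ℕ)) = 0 := by
      push_cast
      rw [hQdef] at ha hb
      simp only at ha hb
      rw [ha, hb, sub_self]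
    exact (ZMod.intCast_zmod_eq_zero_iff_dvd _ _).mp this
  set s' : ℕ+ → Fin m → ℤ :=
    fun j i => (P (f (j : ℕ)) i - P (f ((j : ℕ) - 1)) i) / ((n : ℕ) : ℤ) with hs'def
  have hns' : ∀ (j : ℕ+) (i : Fin m),
      ((n : ℕ) : ℤ) * s' j i = P (f (j : ℕ)) i - P (f ((j : ℕ) - 1)) i :=
    fun j i => Int.mul_ediv_cancel' (hdvd _ _ i)
  obtain ⟨r, α, hα, hres⟩ := hF m s'
  set B : ℕ+ → Finset ℕ+ := fun j => (Finset.Ico (f ((j : ℕ) - 1)) (f (j : ℕ))).image g with hB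
  have hgInj : Function.Injective g := by
    intro a b hab
    have := congrArg PNat.val hab
    simpa [hg] using this
  have hIle : ∀ j : ℕ+, f ((j : ℕ) - 1) < f (j : ℕ) := by
    intro j
    exact hfmono (Nat.sub_lt j.pos Nat.one_pos)
  have hBsum : ∀ (j : ℕ+) (i : Fin m),
      ∑ l ∈ B j, s l i = P (f (j : ℕ)) i - P (f ((j : ℕ) - 1)) i := by
    intro j i
    rw [hB]
    simp only
    rw [Finset.sum_image (fun a _ b _ h => hgInj h)]
    rw [Finset.sum_Ico_eq_sub _ (le_of_lt (hIle j))]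
  have hBdisj : ∀ j₁ ∈ α, ∀ j₂ ∈ α, j₁ ≠ j₂ → Disjoint (B j₁) (B j₂) := by
    have key : ∀ j₁ j₂ : ℕ+, j₁ < j₂ → Disjoint (B j₁) (B j₂) := by
      intro j₁ j₂ hlt
      rw [hB]
      simp only
      apply (Finset.disjoint_image hgInj).mpr
      have hle : f (j₁ : ℕ) ≤ f ((j₂ : ℕ) - 1) :=
        hfmono.monotone (Nat.le_sub_one_of_lt (by exact_mod_cast hlt))
      rw [Finset.disjoint_left]
      intro x hx hx'
      have h1 := (Finset.mem_Ico.mp hx).2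
      have h2 := (Finset.mem_Ico.mp hx').1
      omega
    intro j₁ _ j₂ _ hne
    rcases lt_or_gt_of_ne hne with h | h
    · exact key _ _ h
    · exact (key _ _ h).symm
  refine ⟨n * r, α.biUnion B, ?_, ?_⟩
  · obtain ⟨j, hj⟩ := hα
    refine ⟨g (f ((j : ℕ) - 1)), Finset.mem_biUnion.mpr ⟨j, hj, ?_⟩⟩
    rw [hB]
    exact Finset.mem_image_of_mem g (Finset.mem_Ico.mpr ⟨le_refl _, hIle j⟩)
  · intro i
    obtain ⟨k, hkF, hk⟩ := hres i
    refine ⟨n * k, ⟨k, hkF, rfl⟩, ?_⟩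
    have hsum : ∑ l ∈ α.biUnion B, s l i = ((n : ℕ) : ℤ) * ∑ j ∈ α, s' j i := by
      rw [Finset.sum_biUnion]
      · rw [Finset.mul_sum]
        exact Finset.sum_congr rfl fun j _ => by rw [hBsum j i, ← hns' j i]
      · intro j₁ h₁ j₂ h₂ hne
        exact hBdisj j₁ h₁ j₂ h₂ hne
    rw [hsum]
    push_cast
    rw [hk]
    ring
end

section
/- A subset F of ℕ is a C-set if and only if there exist a dynamical system (X,T), points x, y ∈ X such that (i) for every open neighborhood V of y the set N(y,V) = {n ∈ ℕ : T^n y ∈ V} is a J-set, and (ii) (y,y) lies in the ω-limit set of (x,y) under T×T (i.e., for every open set W ∋ (y,y) and every m ∈ ℕ there exists n ≥ m with (T×T)^n(x,y) ∈ W), together with an open neighborhood U of y such that F = N(x,U) = {n ∈ ℕ : T^n x ∈ U}. -/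
/-!
J-sets are partition regular (by the Hales–Jewett theorem), so every filter of J-sets extends to
an ultrafilter all of whose members are J-sets. These ultrafilters form a closed subset of `βℕ₊`,
and `p + q` is one of them whenever `p` is. For `(⇐)`: those `u` with `u-lim Tⁿx = u-lim Tⁿy = y`
form a compact subsemigroup, nonempty since the `N(y, V)` are J-sets and `(y, y)` is a cluster
point of the orbit of `(x, y)`; an idempotent in it puts `N(x, U)` into a C-set ultrafilter.
For `(⇒)`: take for `x` the indicator sequence of `F` in the shift space and for `y` its limit
along the idempotent `p`; idempotence of `p` makes `y` its own `p`-limit.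
-/

open Finset

/-- An ultrafilter `p` on `ℕ₊` is idempotent: `p + p = p`, where
`A ∈ p + q ↔ {n | {m | n + m ∈ A} ∈ q} ∈ p`. -/
def IsIdempotentUF (p : Ultrafilter ℕ+) : Prop :=
  ∀ A : Set ℕ+, ({n : ℕ+ | {m : ℕ+ | n + m ∈ A} ∈ p} ∈ p ↔ A ∈ p)

/-- `F ⊆ ℕ₊` is a C-set: there is an idempotent ultrafilter `p` on `ℕ₊` such that
`F ∈ p` and every member of `p` is a J-set. -/
def IsCSet (F : Set ℕ+) : Prop :=
  ∃ p : Ultrafilter ℕ+, IsIdempotentUF p ∧ (∀ A ∈ p, IsJSet A) ∧ F ∈ p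

theorem IsJSet.mono {A B : Set ℕ+} (hA : IsJSet A) (hAB : A ⊆ B) : IsJSet B := fun m s =>
  let ⟨r, α, hα, hr⟩ := hA m s
  ⟨r, α, hα, fun i => let ⟨k, hk, hke⟩ := hr i; ⟨k, hAB hk, hke⟩⟩

theorem not_isJSet_empty : ¬ IsJSet ∅ := fun h =>
  let ⟨_, _, _, hr⟩ := h 1 fun _ _ => 0
  let ⟨_, hk, _⟩ := hr 0
  hk

theorem isJSet_iff_forall_fintype {A : Set ℕ+} :
    IsJSet A ↔ ∀ (ι : Type) [Fintype ι] (s : ℕ+ → ι → ℤ), ∃ (r : ℕ+) (α : Finset ℕ+),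
      α.Nonempty ∧ ∀ i, ∃ k ∈ A, ((k : ℕ) : ℤ) = ((r : ℕ) : ℤ) + ∑ n ∈ α, s n i := by
  refine ⟨fun h ι _ s => ?_, fun h m s => h (Fin m) s⟩
  obtain ⟨r, α, hα, hr⟩ := h _ fun n j => s n ((Fintype.equivFin ι).symm j)
  exact ⟨r, α, hα, fun i => by simpa using hr (Fintype.equivFin ι i)⟩

theorem isJSet_of_forall_exists_int {A : Set ℕ+}
    (h : ∀ (ι : Type) [Fintype ι] (s : ℕ+ → ι → ℤ), ∃ (R : ℤ) (α : Finset ℕ+),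
      α.Nonempty ∧ ∀ i, ∃ k ∈ A, ((k : ℕ) : ℤ) = R + ∑ n ∈ α, s n i) :
    IsJSet A := by
  intro m s
  -- adjoining the zero sequence forces the shift `R` to be an element of `A`
  obtain ⟨R, α, hα, hR⟩ := h (Option (Fin m)) fun n i => i.elim 0 (s n)
  obtain ⟨r, -, hr⟩ := hR none
  refine ⟨r, α, hα, fun i => ?_⟩
  simpa [hr] using hR (some i)

theorem Combinatorics.Line.exists_sum_apply_eq {α ι M : Type*} [Fintype ι] [AddCommMonoid M]
    (l : Line α ι) (g : ι → α → M) :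
    ∃ c, ∀ a, ∑ i, g i (l a i) = c + ∑ i with l.idxFun i = none, g i a := by
  refine ⟨∑ i, (l.idxFun i).elim 0 (g i), fun a => ?_⟩
  rw [Finset.sum_filter, ← Finset.sum_add_distrib]
  refine Finset.sum_congr rfl fun i _ => ?_
  cases h : l.idxFun i <;> simp [h]

theorem IsJSet.or_of_union {A B : Set ℕ+} (h : IsJSet (A ∪ B)) : IsJSet A ∨ IsJSet B := by
  classical
  refine or_iff_not_imp_right.2 fun hB => isJSet_of_forall_exists_int fun ι _ s => ?_
  obtain ⟨κ, _, v, hv⟩ : ∃ (κ : Type) (_ : Fintype κ) (v : ℕ+ → κ → ℤ), ∀ (R : ℤ)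
      (γ : Finset ℕ+), γ.Nonempty → ∃ j, ∀ k ∈ B, ((k : ℕ) : ℤ) ≠ R + ∑ n ∈ γ, v n j := by
    simpa using mt isJSet_of_forall_exists_int hB
  obtain ⟨D, _, hHJ⟩ := Combinatorics.Line.exists_mono_in_high_dimension κ (ι → Bool)
  obtain ⟨φ, hφ⟩ : ∃ φ : D × ℕ+ → ℕ+, φ.Injective := by
    obtain ⟨φ, hφ⟩ := Countable.exists_injective_nat (D × ℕ+)
    exact ⟨Nat.succPNat ∘ φ, Nat.succPNat_injective.comp hφ⟩
  -- Along a Hales–Jewett line `l`, the sums `∑ n ∈ α, t n (i, l a)` differ from each other by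
  -- `v`-sums over one set `Γ`. As `B` is not a J-set, for some letter `a` the point misses `B`,
  -- hence lies in `A`, and monochromaticity transfers this to every letter.
  let t : ℕ+ → ι × (D → κ) → ℤ := fun n p => s n p.1 + ∑ d, v (φ (d, n)) (p.2 d)
  obtain ⟨r, α, hα, hr⟩ := isJSet_iff_forall_fintype.1 h _ t
  obtain ⟨l, c, hl⟩ := hHJ fun f i => decide (∃ k ∈ A, ((k : ℕ) : ℤ) = r + ∑ n ∈ α, t n (i, f))
  obtain ⟨R, hR⟩ := l.exists_sum_apply_eq fun d a => ∑ n ∈ α, v (φ (d, n)) a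
  let Γ : Finset ℕ+ := (({d | l.idxFun d = none} : Finset D) ×ˢ α).image φ
  have hΓ : Γ.Nonempty := by
    obtain ⟨d, hd⟩ := l.proper
    exact (Finset.Nonempty.product ⟨d, by simpa using hd⟩ hα).image φ
  have ht : ∀ i a, r + ∑ n ∈ α, t n (i, l a) = r + R + ∑ n ∈ α, s n i + ∑ q ∈ Γ, v q a := by
    intro i a
    simp only [t, Γ, Finset.sum_add_distrib]
    rw [Finset.sum_comm (s := α), hR a, Finset.sum_image hφ.injOn, Finset.sum_product]
    ring
  have hc : ∀ i, c i = true := by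
    intro i
    obtain ⟨a, ha⟩ := hv _ Γ hΓ
    obtain ⟨k, hk, hke⟩ := hr (i, l a)
    rw [← hl a]
    exact decide_eq_true ⟨k, hk.resolve_right fun hkB => ha k hkB (hke.trans (ht i a)), hke⟩
  obtain ⟨a, -⟩ := hv 0 Γ hΓ
  refine ⟨r + R + ∑ q ∈ Γ, v q a, α, hα, fun i => ?_⟩
  obtain ⟨k, hk, hke⟩ := of_decide_eq_true ((congrFun (hl a) i).trans (hc i))
  exact ⟨k, hk, by rw [hke, ht]; ring⟩

open Filter Topology

def jFilter : Filter ℕ+ :=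
  comk (fun A => ¬ IsJSet A) not_isJSet_empty (fun _ hB _ hAB hA => hB (hA.mono hAB))
    fun _ hA _ hB hAB => hAB.or_of_union.elim hA hB

theorem Ultrafilter.le_jFilter_iff {u : Ultrafilter ℕ+} : ↑u ≤ jFilter ↔ ∀ A ∈ u, IsJSet A := by
  refine ⟨fun hu A hA => by_contra fun hJ => ?_, fun hu B hB => by_contra fun hBu => ?_⟩
  · exact u.compl_notMem_iff.2 hA (hu (mem_comk.2 (by rwa [compl_compl])))
  · exact mem_comk.1 hB (hu _ (u.compl_mem_iff_notMem.2 hBu))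

theorem exists_ultrafilter_le_jFilter {f : Filter ℕ+} (hf : ∀ A ∈ f, IsJSet A) :
    ∃ u : Ultrafilter ℕ+, ↑u ≤ f ∧ ↑u ≤ jFilter := by
  have : (f ⊓ jFilter).NeBot := inf_neBot_iff.2 fun A hA B hB => by
    by_contra hAB
    exact mem_comk.1 hB ((hf A hA).mono fun n hn hnB => hAB ⟨n, hn, hnB⟩)
  obtain ⟨u, hu⟩ := exists_ultrafilter_le (f ⊓ jFilter)
  exact ⟨u, hu.trans inf_le_left, hu.trans inf_le_right⟩

theorem Ultrafilter.isClosed_setOf_coe_le {α : Type*} (f : Filter α) :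
    IsClosed {u : Ultrafilter α | ↑u ≤ f} := by
  simp only [Filter.le_def, Set.ofPred_forall]
  exact isClosed_biInter fun s _ => ultrafilter_isClosed_basic s

attribute [local instance] Ultrafilter.add Ultrafilter.addSemigroup

theorem isIdempotentUF_iff {p : Ultrafilter ℕ+} : IsIdempotentUF p ↔ p + p = p :=
  ⟨fun hp => Ultrafilter.ext hp, fun hp A => Ultrafilter.ext_iff.1 hp A⟩

theorem Ultrafilter.add_le_jFilter {p : Ultrafilter ℕ+} (hp : ↑p ≤ jFilter) (q : Ultrafilter ℕ+) :
    ↑(p + q) ≤ jFilter := by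
  rw [Ultrafilter.le_jFilter_iff] at hp ⊢
  intro A hA m s
  obtain ⟨r, α, hα, hr⟩ := hp _ hA m s
  choose k hk hke using hr
  obtain ⟨n, hn⟩ := Filter.nonempty_of_mem (Filter.iInter_mem.2 hk)
  refine ⟨r + n, α, hα, fun i => ⟨k i + n, Set.mem_iInter.1 hn i, ?_⟩⟩
  push_cast
  linarith [hke i]

theorem Ultrafilter.le_atTop_of_add_self {p : Ultrafilter ℕ+} (hp : p + p = p) :
    (p : Filter ℕ+) ≤ atTop := by
  refine atTop_basis.ge_iff.2 fun m _ => by_contra fun hm => ?_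
  obtain ⟨j, -, rfl⟩ := Ultrafilter.eq_pure_of_finite_mem (Set.finite_Iio m)
    (by rwa [← Set.compl_Ici, Ultrafilter.compl_mem_iff_notMem])
  exact (PNat.lt_add_right j j).ne' (Ultrafilter.pure_injective hp)

section Dynamics

variable {X : Type*} [TopologicalSpace X] {T : X → X}

theorem tendsto_iterate_add (hT : Continuous T) {u v : Ultrafilter ℕ+} {x y z : X}
    (hv : Tendsto (fun n : ℕ+ => T^[n] x) v (𝓝 y)) (hu : Tendsto (fun n : ℕ+ => T^[n] y) u (𝓝 z)) :
    Tendsto (fun n : ℕ+ => T^[n] x) ↑(u + v) (𝓝 z) := fun V hV => by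
  refine (hu.eventually (eventually_mem_nhds_iff.2 hV)).mono fun n hn => ?_
  filter_upwards [((hT.iterate n).tendsto y).comp hv hn] with m hm
  simpa [Function.iterate_add_apply] using hm

theorem tendsto_iterate_self_of_add_self [CompactSpace X] [T2Space X] (hT : Continuous T)
    {p : Ultrafilter ℕ+} (hp : p + p = p) {x y : X}
    (hx : Tendsto (fun n : ℕ+ => T^[n] x) p (𝓝 y)) : Tendsto (fun n : ℕ+ => T^[n] y) p (𝓝 y) := by
  have hy : Tendsto (fun n : ℕ+ => T^[n] y) p (𝓝 _) := (p.map _).le_nhds_lim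
  have hx' := tendsto_iterate_add hT hx hy
  rw [hp] at hx'
  rwa [tendsto_nhds_unique hx' hx] at hy

theorem exists_add_self_le_jFilter_tendsto (hT : Continuous T) {x y : X} {q₀ q₁ : Ultrafilter ℕ+}
    (hq₀ : ↑q₀ ≤ jFilter) (hq₀y : Tendsto (fun n : ℕ+ => T^[n] y) q₀ (𝓝 y))
    (hq₁x : Tendsto (fun n : ℕ+ => T^[n] x) q₁ (𝓝 y))
    (hq₁y : Tendsto (fun n : ℕ+ => T^[n] y) q₁ (𝓝 y)) :
    ∃ p : Ultrafilter ℕ+, p + p = p ∧ ↑p ≤ jFilter ∧ Tendsto (fun n : ℕ+ => T^[n] x) p (𝓝 y) := by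
  have hclosed : ∀ g : ℕ+ → X, IsClosed {u : Ultrafilter ℕ+ | Tendsto g u (𝓝 y)} := fun g => by
    simpa only [tendsto_iff_comap] using Ultrafilter.isClosed_setOf_coe_le _
  let S := {u : Ultrafilter ℕ+ | ↑u ≤ jFilter ∧ Tendsto (fun n : ℕ+ => T^[n] x) u (𝓝 y) ∧
    Tendsto (fun n : ℕ+ => T^[n] y) u (𝓝 y)}
  have hS : IsClosed S :=
    (Ultrafilter.isClosed_setOf_coe_le _).inter ((hclosed _).inter (hclosed _))
  obtain ⟨p, ⟨hpJ, hpx, -⟩, hp⟩ := exists_idempotent_in_compact_add_subsemigroup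
    Ultrafilter.continuous_add_left S
    ⟨q₀ + q₁, Ultrafilter.add_le_jFilter hq₀ q₁, tendsto_iterate_add hT hq₁x hq₀y,
      tendsto_iterate_add hT hq₁y hq₀y⟩ hS.isCompact
    fun u ⟨huJ, _, huy⟩ v ⟨_, hvx, hvy⟩ =>
      ⟨Ultrafilter.add_le_jFilter huJ v, tendsto_iterate_add hT hvx huy,
        tendsto_iterate_add hT hvy huy⟩
  exact ⟨p, hp, hpJ, hpx⟩

theorem isCSet_of_mapClusterPt (hT : Continuous T) {x y : X}
    (hJ : ∀ V ∈ 𝓝 y, IsJSet {n : ℕ+ | T^[n] y ∈ V})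
    (hω : MapClusterPt (y, y) atTop fun n : ℕ+ => (T^[n] x, T^[n] y)) {U : Set X}
    (hU : U ∈ 𝓝 y) : IsCSet {n : ℕ+ | T^[n] x ∈ U} := by
  obtain ⟨q₀, hq₀y, hq₀⟩ := exists_ultrafilter_le_jFilter (f := comap (fun n : ℕ+ => T^[n] y) (𝓝 y))
    fun _ ⟨V, hV, hVA⟩ => (hJ V hV).mono hVA
  obtain ⟨q₁, -, hq₁⟩ := mapClusterPt_iff_ultrafilter.1 hω
  rw [Prod.tendsto_iff] at hq₁
  obtain ⟨p, hp, hpJ, hpx⟩ :=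
    exists_add_self_le_jFilter_tendsto hT hq₀ (tendsto_iff_comap.2 hq₀y) hq₁.1 hq₁.2
  exact ⟨p, isIdempotentUF_iff.2 hp, Ultrafilter.le_jFilter_iff.1 hpJ, hpx hU⟩

end Dynamics

def shift {α : Type*} (z : ℕ → α) : ℕ → α := fun k => z (k + 1)

theorem shift_iterate_apply {α : Type*} (n : ℕ) (z : ℕ → α) (k : ℕ) :
    shift^[n] z k = z (k + n) := by
  induction n generalizing z with
  | zero => rfl
  | succ n ih => exact ih (shift z)

theorem continuous_shift {α : Type*} [TopologicalSpace α] : Continuous (shift : (ℕ → α) → ℕ → α) :=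
  continuous_pi fun k => continuous_apply (k + 1)

theorem IsCSet.exists_shift {F : Set ℕ+} (hF : IsCSet F) :
    ∃ x y : ℕ → Bool, (∀ V ∈ 𝓝 y, IsJSet {n : ℕ+ | shift^[n] y ∈ V}) ∧
      MapClusterPt (y, y) atTop (fun n : ℕ+ => (shift^[n] x, shift^[n] y)) ∧
      y 0 = true ∧ F = {n : ℕ+ | shift^[n] x 0 = true} := by
  obtain ⟨p, hp, hpJ, hFp⟩ := hF
  rw [isIdempotentUF_iff] at hp
  let x := (((↑) : ℕ+ → ℕ) '' F).boolIndicator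
  have hxF : ∀ n : ℕ+, shift^[n] x 0 = true ↔ n ∈ F := fun n => by
    simp [x, shift_iterate_apply, ← Set.mem_iff_boolIndicator]
  let y := (p.map fun n : ℕ+ => shift^[n] x).lim
  have hx : Tendsto (fun n : ℕ+ => shift^[n] x) p (𝓝 y) := (p.map _).le_nhds_lim
  have hy := tendsto_iterate_self_of_add_self continuous_shift hp hx
  refine ⟨x, y, fun V hV => hpJ _ (hy hV),
    ((hx.prodMk_nhds hy).mapClusterPt).mono (Ultrafilter.le_atTop_of_add_self hp), ?_,
    Set.ext fun n => (hxF n).symm⟩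
  refine tendsto_nhds_unique (((continuous_apply 0).tendsto y).comp hx)
    (tendsto_const_nhds.congr' ?_)
  filter_upwards [hFp] with n hn
  exact ((hxF n).2 hn).symm

theorem mapClusterPt_atTop_iff {ι Y : Type*} [TopologicalSpace Y] [SemilatticeSup ι] [Nonempty ι]
    {u : ι → Y} {a : Y} :
    MapClusterPt a atTop u ↔ ∀ W, IsOpen W → a ∈ W → ∀ m, ∃ n, m ≤ n ∧ u n ∈ W := by
  simp only [(nhds_basis_opens a).mapClusterPt_iff_frequently, frequently_atTop]
  exact ⟨fun h W hW haW => h W ⟨haW, hW⟩, fun h W ⟨haW, hW⟩ => h W hW haW⟩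

/-- Dynamical characterization of C-sets: `F ⊆ ℕ₊` is a C-set iff there are a dynamical
system `(X, T)`, points `x, y ∈ X` such that `N(y, V)` is a J-set for every open
neighborhood `V` of `y` and `(y, y)` lies in the ω-limit set of `(x, y)` under `T × T`,
and an open neighborhood `U` of `y` with `F = N(x, U)`. -/
theorem cset_dynamical_characterization (F : Set ℕ+) :
    IsCSet F ↔
      ∃ (X : Type) (_ : TopologicalSpace X) (T : X → X) (x y : X) (U : Set X),
        Nonempty X ∧ CompactSpace X ∧ T2Space X ∧ Continuous T ∧
        (∀ V : Set X, IsOpen V → y ∈ V → IsJSet {n : ℕ+ | T^[(n : ℕ)] y ∈ V}) ∧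
        (∀ W : Set (X × X), IsOpen W → (y, y) ∈ W →
          ∀ m : ℕ+, ∃ n : ℕ+, m ≤ n ∧ (T^[(n : ℕ)] x, T^[(n : ℕ)] y) ∈ W) ∧
        IsOpen U ∧ y ∈ U ∧ F = {n : ℕ+ | T^[(n : ℕ)] x ∈ U} := by
  constructor
  · intro hF
    obtain ⟨x, y, hJ, hω, hy, hxF⟩ := hF.exists_shift
    exact ⟨ℕ → Bool, inferInstance, shift, x, y, (· 0) ⁻¹' {true}, inferInstance, inferInstance,
      inferInstance, continuous_shift, fun V hV hyV => hJ V (hV.mem_nhds hyV),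
      mapClusterPt_atTop_iff.1 hω, (isOpen_discrete _).preimage (continuous_apply 0),
      hy, hxF⟩
  · rintro ⟨X, _, T, x, y, U, -, -, -, hT, hJ, hω, hU, hyU, rfl⟩
    refine isCSet_of_mapClusterPt hT (fun V hV => ?_) (mapClusterPt_atTop_iff.2 hω)
      (hU.mem_nhds hyU)
    obtain ⟨W, hWV, hW, hyW⟩ := mem_nhds_iff.1 hV
    exact (hJ W hW hyW).mono fun n hn => hWV hn
end

section
/- Let F ⊆ ℕ be a C-set, let m ∈ ℕ, and let s : ℕ → ℤ^m determine the IP-system (s_α) with s_α = ∑_{n∈α} s(n). Then there exist a sequence r : ℕ → ℕ (determining the IP-system r_α = ∑_{n∈α} r(n)) and a homomorphism φ : 𝒫_f(ℕ) → 𝒫_f(ℕ) such that for every nonempty finite α ⊆ ℕ and every i ∈ {1,…,m}, r_α + s_{φ(α)}(i) ∈ F. -/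
open Finset

/-- A homomorphism `φ : 𝒫_f(ℕ₊) → 𝒫_f(ℕ₊)`: it maps nonempty finite sets to nonempty
finite sets, disjoint sets to disjoint sets, and commutes with unions. -/
def IsPfHom (φ : Finset ℕ+ → Finset ℕ+) : Prop :=
  (∀ α : Finset ℕ+, α.Nonempty → (φ α).Nonempty) ∧
  (∀ α β : Finset ℕ+, α.Nonempty → β.Nonempty → Disjoint α β → Disjoint (φ α) (φ β)) ∧
  (∀ α β : Finset ℕ+, α.Nonempty → β.Nonempty → φ (α ∪ β) = φ α ∪ φ β)

namespace CST
variable (p : Ultrafilter ℕ+) (F : Set ℕ+)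

def pstar : Set ℕ+ := {n | n ∈ F ∧ {m | n + m ∈ F} ∈ p}

lemma pstar_subset : pstar p F ⊆ F := fun _ h => h.1

lemma pstar_mem (hid : ∀ A : Set ℕ+, ({n : ℕ+ | {m : ℕ+ | n + m ∈ A} ∈ p} ∈ p ↔ A ∈ p))
    (hF : F ∈ p) : pstar p F ∈ p := by
  have h2 : {n : ℕ+ | {m | n + m ∈ F} ∈ p} ∈ p := (hid F).mpr hF
  exact Filter.inter_mem hF h2

lemma pstar_shift (hid : ∀ A : Set ℕ+, ({n : ℕ+ | {m : ℕ+ | n + m ∈ A} ∈ p} ∈ p ↔ A ∈ p))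
    {n : ℕ+} (hn : n ∈ pstar p F) : {m | n + m ∈ pstar p F} ∈ p := by
  have h1 : {m : ℕ+ | n + m ∈ F} ∈ p := hn.2
  have h2 : {x : ℕ+ | {k : ℕ+ | x + k ∈ {m : ℕ+ | n + m ∈ F}} ∈ p} ∈ p := (hid _).mpr h1
  have h3 := Filter.inter_mem h1 h2
  refine p.toFilter.mem_of_superset h3 ?_
  rintro x ⟨hx1, hx2⟩
  refine ⟨hx1, ?_⟩
  have : {k : ℕ+ | x + k ∈ {m : ℕ+ | n + m ∈ F}} = {k : ℕ+ | n + x + k ∈ F} := by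
    ext k; simp [Set.mem_setOf_eq, add_assoc]
  exact this ▸ hx2

variable (mm : ℕ) (s : ℕ+ → Fin mm → ℤ)

def sumExpr (f : ℕ → ℕ+ × Finset ℕ+) (γ : Finset ℕ) (i : Fin mm) : ℤ :=
  ∑ t ∈ γ, ((((f t).1 : ℕ) : ℤ) + ∑ x ∈ (f t).2, s x i)

def Good (f : ℕ → ℕ+ × Finset ℕ+) (n : ℕ) : Prop :=
  (f n).2.Nonempty ∧
  (∀ m' < n, ∀ x ∈ (f m').2, ∀ y ∈ (f n).2, x < y) ∧
  (∀ γ : Finset ℕ, n ∈ γ → (∀ t ∈ γ, t ≤ n) → ∀ i : Fin mm,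
     ∃ k ∈ pstar p F, ((k : ℕ) : ℤ) = sumExpr mm s f γ i)

lemma good_congr {f g : ℕ → ℕ+ × Finset ℕ+} {n : ℕ} (h : ∀ t ≤ n, f t = g t)
    (hg : Good p F mm s f n) : Good p F mm s g n := by
  obtain ⟨h1, h2, h3⟩ := hg
  refine ⟨(h n le_rfl) ▸ h1, ?_, ?_⟩
  · intro m' hm'
    rw [← h m' hm'.le, ← h n le_rfl]
    exact h2 m' hm'
  · intro γ hγ hγle i
    obtain ⟨k, hk1, hk2⟩ := h3 γ hγ hγle i
    refine ⟨k, hk1, hk2.trans ?_⟩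
    unfold sumExpr
    exact Finset.sum_congr rfl (fun t ht => by rw [h t (hγle t ht)])

lemma key (hid : ∀ A : Set ℕ+, ({n : ℕ+ | {m : ℕ+ | n + m ∈ A} ∈ p} ∈ p ↔ A ∈ p))
    (hJ : ∀ A ∈ p, IsJSet A) (hFp : F ∈ p)
    (n : ℕ) (f : ℕ → ℕ+ × Finset ℕ+) (hf : ∀ m' < n, Good p F mm s f m') :
    ∃ x : ℕ+ × Finset ℕ+, Good p F mm s (Function.update f n x) n := by
  -- witnesses for previous sums
  have hprev : ∀ γ : Finset ℕ, γ.Nonempty → (∀ t ∈ γ, t < n) → ∀ i : Fin mm,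
      ∃ k ∈ pstar p F, ((k : ℕ) : ℤ) = sumExpr mm s f γ i := by
    intro γ hγne hγlt i
    have hmax := Finset.max'_mem γ hγne
    exact (hf (γ.max' hγne) (hγlt _ hmax)).2.2 γ hmax (fun t ht => Finset.le_max' γ t ht) i
  have hK : ∀ (γ : Finset ℕ) (i : Fin mm), ∃ k : ℕ+,
      (γ.Nonempty → (∀ t ∈ γ, t < n) →
        k ∈ pstar p F ∧ ((k : ℕ) : ℤ) = sumExpr mm s f γ i) := by
    intro γ i
    by_cases h : γ.Nonempty ∧ ∀ t ∈ γ, t < n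
    · obtain ⟨k, hk1, hk2⟩ := hprev γ h.1 h.2 i
      exact ⟨k, fun _ _ => ⟨hk1, hk2⟩⟩
    · exact ⟨1, fun h1 h2 => absurd ⟨h1, h2⟩ h⟩
  choose K hKs using hK
  -- the set T
  set T : Set ℕ+ := pstar p F ∩
    ⋂ γ ∈ ((Finset.range n).powerset.erase ∅), ⋂ i : Fin mm, {m | K γ i + m ∈ pstar p F}
    with hTdef
  have hvalid : ∀ γ ∈ (Finset.range n).powerset.erase ∅, γ.Nonempty ∧ ∀ t ∈ γ, t < n := by
    intro γ hγ
    rw [Finset.mem_erase, Finset.mem_powerset] at hγ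
    exact ⟨Finset.nonempty_iff_ne_empty.mpr hγ.1, fun t ht => Finset.mem_range.mp (hγ.2 ht)⟩
  have hT : T ∈ p := by
    refine Filter.inter_mem (pstar_mem p F hid hFp) ?_
    refine (Filter.biInter_finset_mem _).mpr (fun γ hγ => ?_)
    refine Filter.iInter_mem.mpr (fun i => ?_)
    obtain ⟨h1, h2⟩ := hvalid γ hγ
    exact pstar_shift p F hid (hKs γ i h1 h2).1
  -- bound
  set M : ℕ := (Finset.range n).sup (fun t => (f t).2.sup (fun y : ℕ+ => (y : ℕ))) with hMdef
  have hMb : ∀ m' < n, ∀ y ∈ (f m').2, (y : ℕ) ≤ M := by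
    intro m' hm' y hy
    have h1 : (y : ℕ) ≤ (f m').2.sup (fun y : ℕ+ => (y : ℕ)) := Finset.le_sup (f := fun y : ℕ+ => (y : ℕ)) hy
    have h2 : (f m').2.sup (fun y : ℕ+ => (y : ℕ)) ≤ M := by
      rw [hMdef]; exact Finset.le_sup (f := fun t => (f t).2.sup (fun y : ℕ+ => (y : ℕ))) (Finset.mem_range.mpr hm')
    exact le_trans h1 h2
  set c : ℕ+ := ⟨M + 1, Nat.succ_pos M⟩ with hcdef
  -- apply J-set property
  obtain ⟨r, α, hαne, hα⟩ := hJ T hT mm (fun x i => s (x + c) i)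
  have hinj : Function.Injective (fun a : ℕ+ => a + c) := fun a b h => by
    simpa using add_left_injective c h
  set β : Finset ℕ+ := α.image (fun a => a + c) with hβdef
  have hβsum : ∀ i : Fin mm, ∑ x ∈ β, s x i = ∑ a ∈ α, s (a + c) i := fun i =>
    Finset.sum_image (fun a _ b _ h => hinj h)
  have hβbig : ∀ y ∈ β, M < (y : ℕ) := by
    intro y hy
    obtain ⟨a, _, rfl⟩ := Finset.mem_image.mp hy
    have h1 : (1 : ℕ) ≤ (a : ℕ) := a.one_le
    have h2 : (c : ℕ) = M + 1 := rfl
    simp only [PNat.add_coe]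
    omega
  refine ⟨(r, β), ?_, ?_, ?_⟩
  · simp only [Function.update_self]
    exact hαne.image _
  · intro m' hm' x hx y hy
    rw [Function.update_of_ne (Nat.ne_of_lt hm') _ f] at hx
    rw [Function.update_self] at hy
    have h1 := hMb m' hm' x hx
    have h2 := hβbig y hy
    exact (PNat.coe_lt_coe x y).mp (by omega)
  · intro γ hγ hγle i
    obtain ⟨k₁, hk₁T, hk₁v⟩ := hα i
    have hk₁v' : ((k₁ : ℕ) : ℤ) = ((r : ℕ) : ℤ) + ∑ x ∈ β, s x i := by
      rw [hβsum i]; exact hk₁v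
    have hsum_split : sumExpr mm s (Function.update f n (r, β)) γ i
        = sumExpr mm s f (γ.erase n) i + (((r : ℕ) : ℤ) + ∑ x ∈ β, s x i) := by
      unfold sumExpr
      rw [← Finset.sum_erase_add _ _ hγ]
      congr 1
      · exact Finset.sum_congr rfl (fun t ht => by
          rw [Function.update_of_ne (Finset.ne_of_mem_erase ht) _ f])
      · rw [Function.update_self]
    by_cases hγ' : (γ.erase n).Nonempty
    · have hlt : ∀ t ∈ γ.erase n, t < n := fun t ht =>
        lt_of_le_of_ne (hγle t (Finset.mem_of_mem_erase ht)) (Finset.ne_of_mem_erase ht)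
      have hmem : γ.erase n ∈ (Finset.range n).powerset.erase ∅ := by
        rw [Finset.mem_erase, Finset.mem_powerset]
        exact ⟨Finset.nonempty_iff_ne_empty.mp hγ', fun t ht => Finset.mem_range.mpr (hlt t ht)⟩
      obtain ⟨hK1, hK2⟩ := hKs (γ.erase n) i hγ' hlt
      have hshift : K (γ.erase n) i + k₁ ∈ pstar p F := by
        have h2 := Set.mem_iInter₂.mp hk₁T.2 (γ.erase n) hmem
        exact Set.mem_iInter.mp h2 i
      refine ⟨K (γ.erase n) i + k₁, hshift, ?_⟩
      rw [hsum_split, ← hK2, ← hk₁v', PNat.add_coe]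
      push_cast
      ring
    · rw [Finset.not_nonempty_iff_eq_empty] at hγ'
      refine ⟨k₁, hk₁T.1, ?_⟩
      rw [hsum_split, hγ']
      simp only [sumExpr, Finset.sum_empty]
      rw [hk₁v']
      ring



noncomputable def seqStep (p : Ultrafilter ℕ+) (F : Set ℕ+) (mm : ℕ) (s : ℕ+ → Fin mm → ℤ)
    (hid : ∀ A : Set ℕ+, ({n : ℕ+ | {m : ℕ+ | n + m ∈ A} ∈ p} ∈ p ↔ A ∈ p))
    (hJ : ∀ A ∈ p, IsJSet A) (hFp : F ∈ p) (n : ℕ)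
    (g : {f : ℕ → ℕ+ × Finset ℕ+ // ∀ m' < n, Good p F mm s f m'}) :
    {f : ℕ → ℕ+ × Finset ℕ+ // ∀ m' < n + 1, Good p F mm s f m'} :=
  ⟨Function.update g.1 n (Classical.choose (key p F mm s hid hJ hFp n g.1 g.2)), by
    have hx := Classical.choose_spec (key p F mm s hid hJ hFp n g.1 g.2)
    intro m' hm'
    rcases Nat.lt_succ_iff_lt_or_eq.mp hm' with h | h
    · refine good_congr p F mm s (fun t ht => ?_) (g.2 m' h)
      rw [Function.update_of_ne (by omega) _ g.1]
    · subst h; exact hx⟩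

noncomputable def seqG (p : Ultrafilter ℕ+) (F : Set ℕ+) (mm : ℕ) (s : ℕ+ → Fin mm → ℤ)
    (hid : ∀ A : Set ℕ+, ({n : ℕ+ | {m : ℕ+ | n + m ∈ A} ∈ p} ∈ p ↔ A ∈ p))
    (hJ : ∀ A ∈ p, IsJSet A) (hFp : F ∈ p) :
    ∀ n : ℕ, {f : ℕ → ℕ+ × Finset ℕ+ // ∀ m' < n, Good p F mm s f m'} := fun n =>
  Nat.rec ⟨fun _ => (1, {1}), fun m' hm' => absurd hm' (Nat.not_lt_zero m')⟩
    (fun n g => seqStep p F mm s hid hJ hFp n g) n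

lemma exists_seq (p : Ultrafilter ℕ+) (F : Set ℕ+) (mm : ℕ) (s : ℕ+ → Fin mm → ℤ)
    (hid : ∀ A : Set ℕ+, ({n : ℕ+ | {m : ℕ+ | n + m ∈ A} ∈ p} ∈ p ↔ A ∈ p))
    (hJ : ∀ A ∈ p, IsJSet A) (hFp : F ∈ p) :
    ∃ f : ℕ → ℕ+ × Finset ℕ+, ∀ n, Good p F mm s f n := by
  classical
  set G := seqG p F mm s hid hJ hFp with hG
  have hGsucc : ∀ n, (G (n + 1)).1 =
      Function.update (G n).1 n
        (Classical.choose (key p F mm s hid hJ hFp n (G n).1 (G n).2)) := fun n => rfl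
  have hagree : ∀ n t, t < n → (G n).1 t = (G (t + 1)).1 t := by
    intro n
    induction n with
    | zero => intro t ht; omega
    | succ n ih =>
      intro t ht
      rcases Nat.lt_succ_iff_lt_or_eq.mp ht with h | rfl
      · rw [hGsucc n, Function.update_of_ne (by omega) _ _]
        exact ih t h
      · rfl
  refine ⟨fun n => (G (n + 1)).1 n, fun n => ?_⟩
  refine good_congr p F mm s (fun t ht => ?_) ((G (n + 1)).2 n (Nat.lt_succ_self n))
  rw [hagree (n + 1) t (by omega)]

end CST

/-- Central Sets style theorem for C-sets: for a C-set `F`, `m ∈ ℕ` and the IP-system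
`(s_α)` determined by `s : ℕ₊ → ℤ^m`, there are a sequence `r : ℕ₊ → ℕ₊` (determining
the IP-system `r_α = ∑_{n∈α} r n`) and a homomorphism `φ : 𝒫_f(ℕ₊) → 𝒫_f(ℕ₊)` with
`r_α + s_(φ α) i ∈ F` for every nonempty finite `α` and every `i`. -/
theorem cset_central_sets_theorem (F : Set ℕ+) (hF : IsCSet F)
    (m : ℕ) (s : ℕ+ → Fin m → ℤ) :
    ∃ (r : ℕ+ → ℕ+) (φ : Finset ℕ+ → Finset ℕ+), IsPfHom φ ∧
      ∀ α : Finset ℕ+, α.Nonempty → ∀ i : Fin m,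
        ∃ k ∈ F, ((k : ℕ) : ℤ) = (∑ n ∈ α, ((r n : ℕ) : ℤ)) + ∑ n ∈ φ α, s n i := by
  classical
  obtain ⟨p, hid, hJ, hFp⟩ := hF
  obtain ⟨f, hf⟩ := CST.exists_seq p F m s hid hJ hFp
  have hdisj : ∀ t u : ℕ+, (t : ℕ) ≠ (u : ℕ) → Disjoint (f (t : ℕ)).2 (f (u : ℕ)).2 := by
    have h : ∀ a b : ℕ, a < b → Disjoint (f a).2 (f b).2 := by
      intro a b hab
      rw [Finset.disjoint_left]
      intro x hx1 hx2
      exact absurd ((hf b).2.1 a hab x hx1 x hx2) (lt_irrefl x)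
    intro t u htu
    rcases lt_or_gt_of_ne htu with hh | hh
    · exact h _ _ hh
    · exact (h _ _ hh).symm
  refine ⟨fun t => (f (t : ℕ)).1, fun α => α.biUnion (fun t => (f (t : ℕ)).2),
    ⟨?_, ?_, ?_⟩, ?_⟩
  · intro α hα
    exact hα.biUnion (fun t _ => (hf (t : ℕ)).1)
  · intro α β hα hβ hd
    rw [Finset.disjoint_left]
    intro x hx1 hx2
    obtain ⟨t, ht, hxt⟩ := Finset.mem_biUnion.mp hx1
    obtain ⟨u, hu, hxu⟩ := Finset.mem_biUnion.mp hx2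
    have htu : (t : ℕ) ≠ (u : ℕ) := by
      intro h
      exact (Finset.disjoint_left.mp hd ht) ((PNat.coe_injective h) ▸ hu)
    exact Finset.disjoint_left.mp (hdisj t u htu) hxt hxu
  · intro α β _ _
    ext x
    simp only [Finset.mem_biUnion, Finset.mem_union, or_and_right, exists_or]
  · intro α hα i
    have hγne : (α.image (fun t : ℕ+ => (t : ℕ))).Nonempty := hα.image _
    obtain ⟨k, hk1, hk2⟩ := (hf ((α.image (fun t : ℕ+ => (t : ℕ))).max' hγne)).2.2
      (α.image (fun t : ℕ+ => (t : ℕ))) (Finset.max'_mem _ hγne)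
      (fun t ht => Finset.le_max' _ t ht) i
    refine ⟨k, CST.pstar_subset p F hk1, ?_⟩
    rw [hk2]
    unfold CST.sumExpr
    have h1 : ∑ t ∈ α.image (fun t : ℕ+ => (t : ℕ)),
        ((((f t).1 : ℕ) : ℤ) + ∑ x ∈ (f t).2, s x i)
        = ∑ a ∈ α, ((((f (a : ℕ)).1 : ℕ) : ℤ) + ∑ x ∈ (f (a : ℕ)).2, s x i) :=
      Finset.sum_image (fun x _ y _ h => PNat.coe_injective h)
    rw [h1, Finset.sum_add_distrib]
    congr 1
    have hpd : Set.PairwiseDisjoint (↑α) (fun t : ℕ+ => (f (t : ℕ)).2) := by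
      intro a _ b _ hab
      exact hdisj a b (fun h => hab (PNat.coe_injective h))
    exact (Finset.sum_biUnion hpd).symm
end

section
/- Let A be a p×q matrix with rational entries such that the homogeneous system A(x₁,…,x_q)ᵀ = 0 is partition regular over ℕ, i.e., for every r ∈ ℕ and every partition ℕ = C₁ ∪ … ∪ C_r there exist i ∈ {1,…,r} and x₁,…,x_q ∈ C_i with A(x₁,…,x_q)ᵀ = 0. Then for every C-set F ⊆ ℕ there exist x₁,…,x_q ∈ F with A(x₁,…,x_q)ᵀ = 0. -/
open Finset

/-!
Partition regularity gives Rado's columns condition. Colouring by the last nonzero digit in base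
`P` yields, for every prime `P`, a monochromatic solution `x`, and for infinitely many `P` the
valuations `v_P (x j)` are ordered like a fixed `e j`. If the columns of level `l` did not add up
to a combination of the columns of lower levels, an integral functional `W` vanishing on the latter
would, reduced modulo `P ^ (v + 1)` with `v` the valuation at level `l`, make the nonzero integer
`∑_{e j = l} W j` divisible by all these primes.

The columns condition gives an integer matrix `M` with `A M = 0` whose row `j` starts, in column
`e j`, with a common nonzero entry `c`, and `x = M z` solves the system. Every member `B` of an
idempotent ultrafilter whose members are all J-sets contains some `M z`, by induction on the
columns: the rows starting after the first column are solvable inside every member of the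
ultrafilter, which idempotence upgrades to a sequence `Z` all of whose finite sums solve them in
`B`; the J-set property of `B ∩ cℤ`, applied to the rows starting in the first column, then picks
the finite sum of `Z` and the first coordinate.
-/

def intImage (D : Set ℕ+) : Set ℤ := (fun m : ℕ+ => (m : ℤ)) '' D

def starSet (p : Ultrafilter ℕ+) (B : Set ℕ+) : Set ℕ+ := {n ∈ B | {m | n + m ∈ B} ∈ p}

theorem starSet_subset (p : Ultrafilter ℕ+) (B : Set ℕ+) : starSet p B ⊆ B := fun _ h => h.1

theorem IsJSet.exists_add_sum_mem {F : Set ℕ+} (hF : IsJSet F) {κ : Type*} [Fintype κ]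
    (s : ℕ → κ → ℤ) :
    ∃ r ∈ F, ∃ α : Finset ℕ, α.Nonempty ∧ ∀ i, (r : ℤ) + ∑ n ∈ α, s n i ∈ intImage F := by
  let e := Fintype.equivFin (Option κ)
  -- the extra coordinate `none` carries the zero sequence, which puts `r` itself into `F`
  obtain ⟨r, α, hα, hr⟩ := hF _ fun n i => (e.symm i).elim 0 (s n.natPred)
  have hsum (i : κ) : ∑ n ∈ α, s n.natPred i = ∑ n ∈ α.image PNat.natPred, s n i :=
    (sum_image (f := fun n => s n i) fun _ _ _ _ h => PNat.natPred_injective h).symm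
  refine ⟨r, ?_, α.image PNat.natPred, hα.image _, fun i => ?_⟩
  · obtain ⟨k, hk, hkr⟩ := hr (e none)
    simp only [Equiv.symm_apply_apply, Option.elim_none, sum_const_zero, add_zero] at hkr
    rwa [← PNat.coe_inj.1 (by exact_mod_cast hkr : (k : ℕ) = r)]
  · obtain ⟨k, hk, hkr⟩ := hr (e (some i))
    simp only [Equiv.symm_apply_apply, Option.elim_some, hsum] at hkr
    exact ⟨k, hk, hkr⟩

namespace IsIdempotentUF

variable {p : Ultrafilter ℕ+}

theorem starSet_mem (hp : IsIdempotentUF p) {B : Set ℕ+} (hB : B ∈ p) : starSet p B ∈ p :=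
  Filter.inter_mem hB ((hp B).2 hB)

theorem setOf_add_mem_starSet_mem (hp : IsIdempotentUF p) {B : Set ℕ+} {n : ℕ+}
    (hn : n ∈ starSet p B) : {m | n + m ∈ starSet p B} ∈ p := by
  filter_upwards [hp.starSet_mem hn.2] with m hm
  exact ⟨hm.1, by simpa only [Set.mem_ofPred_eq, add_assoc] using hm.2⟩

theorem setOf_map_eq_zero_mem (hp : IsIdempotentUF p) {G : Type*} [AddCommGroup G] [Finite G]
    (φ : ℕ+ →ₙ+ G) : {n | φ n = 0} ∈ p := by
  obtain ⟨ρ, hρ⟩ := (p.map φ).eq_pure_of_finite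
  have hfiber (σ : G) : {n | φ n = σ} ∈ p ↔ σ = ρ := by
    change φ ⁻¹' {σ} ∈ p ↔ _
    rw [← Ultrafilter.mem_map, hρ, Ultrafilter.mem_pure, Set.mem_singleton_iff, eq_comm]
  filter_upwards [(hp _).2 ((hfiber ρ).2 rfl)] with n hn
  have hshift : {m | φ m = ρ - φ n} = {m | φ (n + m) = ρ} := by
    ext m
    rw [Set.mem_ofPred_eq, Set.mem_ofPred_eq, map_add, eq_sub_iff_add_eq']
  exact sub_eq_self.1 ((hfiber _).1 (hshift ▸ hn))

theorem setOf_dvd_mem (hp : IsIdempotentUF p) {c : ℤ} (hc : c ≠ 0) :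
    {n : ℕ+ | c ∣ (n : ℤ)} ∈ p := by
  have : NeZero c.natAbs := ⟨Int.natAbs_ne_zero.2 hc⟩
  convert hp.setOf_map_eq_zero_mem
    ⟨fun n : ℕ+ => ((n : ℕ) : ZMod c.natAbs), fun _ _ => by simp [PNat.add_coe]⟩ using 3 with n
  change _ ↔ ((n : ℕ) : ZMod c.natAbs) = 0
  rw [ZMod.natCast_eq_zero_iff, ← Int.natAbs_dvd_natAbs, Int.natAbs_natCast]

theorem exists_mem_forall_add_mem (hp : IsIdempotentUF p) {ι β : Type*} (J : Finset ι)
    (val : ι → β → ℤ) (h : ∀ D ∈ p, ∃ z, ∀ j ∈ J, val j z ∈ intImage D) {D : Set ℕ+}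
    (hD : D ∈ p) :
    ∃ z, ∃ D' ∈ p, D' ⊆ D ∧ ∀ j ∈ J, val j z ∈ intImage D ∧ ∀ w ∈ D', val j z + w ∈ intImage D := by
  -- solving in `starSet p D` rather than in `D` leaves a member of `p` of admissible shifts
  obtain ⟨z, hz⟩ := h _ (hp.starSet_mem hD)
  have hshift : {w : ℕ+ | ∀ j ∈ J, val j z + w ∈ intImage (starSet p D)} ∈ p := by
    refine (Filter.eventually_all_finset J).2 fun j hj => ?_
    obtain ⟨m, hm, hmj⟩ := hz j hj
    filter_upwards [hp.setOf_add_mem_starSet_mem hm] with w hw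
    exact ⟨m + w, hw, by rw [← hmj]; simp [PNat.add_coe]⟩
  have hsub := Set.image_mono (f := fun m : ℕ+ => (m : ℤ)) (starSet_subset p D)
  exact ⟨z, _, Filter.inter_mem (hp.starSet_mem hD) hshift, fun w hw => hw.1.1,
    fun j hj => ⟨hsub (hz j hj), fun w hw => hsub (hw.2 j hj)⟩⟩

theorem exists_seq_sum_mem (hp : IsIdempotentUF p) {ι β : Type*} (J : Finset ι)
    (val : ι → β → ℤ) (h : ∀ D ∈ p, ∃ z, ∀ j ∈ J, val j z ∈ intImage D) {B : Set ℕ+}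
    (hB : B ∈ p) :
    ∃ Z : ℕ → β, ∀ α : Finset ℕ, α.Nonempty → ∀ j ∈ J, ∑ k ∈ α, val j (Z k) ∈ intImage B := by
  choose z next hnext_mem hnext_sub hz using
    fun D : {D // D ∈ p} => hp.exists_mem_forall_add_mem J val h D.2
  obtain ⟨S, hS₀, hS⟩ : ∃ S : ℕ → {D // D ∈ p},
      S 0 = ⟨B, hB⟩ ∧ ∀ n, S (n + 1) = ⟨next (S n), hnext_mem (S n)⟩ :=
    ⟨fun n => Nat.rec ⟨B, hB⟩ (fun _ D => ⟨next D, hnext_mem D⟩) n, rfl, fun _ => rfl⟩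
  have hanti : Antitone fun n => (S n : Set ℕ+) :=
    antitone_nat_of_succ_le fun n => by rw [hS]; exact hnext_sub (S n)
  have hmono {a b : ℕ} (hab : a ≤ b) : intImage (S b) ⊆ intImage (S a) := Set.image_mono (hanti hab)
  refine ⟨fun n => z (S n), fun α => ?_⟩
  suffices key : ∀ n, (∀ k ∈ α, n ≤ k) → α.Nonempty →
      ∀ j ∈ J, ∑ k ∈ α, val j (z (S k)) ∈ intImage (S n) from
    by simpa [hS₀] using key 0 fun _ _ => Nat.zero_le _
  induction α using Finset.induction_on_min with
  | empty => simp
  | insert a s has ih =>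
    intro n hn _ j hj
    have hna : n ≤ a := hn a (mem_insert_self a s)
    rw [sum_insert fun ha => lt_irrefl a (has a ha)]
    obtain rfl | hs := s.eq_empty_or_nonempty
    · simpa using hmono hna (hz (S a) j hj).1
    · obtain ⟨w, hw, hw_eq⟩ := ih (a + 1) has hs j hj
      rw [hS] at hw
      rw [← hw_eq]
      exact hmono hna ((hz (S a) j hj).2 w hw)

theorem exists_firstEntries_mem (hp : IsIdempotentUF p) (hpJ : ∀ A ∈ p, IsJSet A) {ι : Type*}
    (lead : ι → ℕ) (a : ℕ → ℤ) (M : ι → ℕ → ℤ) (L : Finset ℕ) (J : Finset ι)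
    (hlead : ∀ j ∈ J, lead j ∈ L) (ha : ∀ l ∈ L, a l ≠ 0)
    (hM : ∀ j ∈ J, M j (lead j) = a (lead j)) (hM0 : ∀ j ∈ J, ∀ l ∈ L, l < lead j → M j l = 0)
    {B : Set ℕ+} (hB : B ∈ p) :
    ∃ z : ℕ → ℤ, ∀ j ∈ J, ∑ l ∈ L, M j l * z l ∈ intImage B := by
  induction L using Finset.induction_on_min generalizing J B with
  | empty => exact ⟨0, fun j hj => absurd (hlead j hj) (notMem_empty _)⟩
  | insert l₀ L hl₀ ih =>
  have hl₀L : l₀ ∉ L := fun h => lt_irrefl l₀ (hl₀ l₀ h)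
  set J₀ := J.filter (lead · = l₀)
  set J' := J.filter (lead · ≠ l₀)
  have hJ' : ∀ j ∈ J', j ∈ J ∧ lead j ∈ L := fun j hj =>
    have hj := mem_filter.1 hj
    ⟨hj.1, (mem_insert.1 (hlead j hj.1)).resolve_left hj.2⟩
  obtain ⟨Z, hZ⟩ := hp.exists_seq_sum_mem J' (fun j (z : ℕ → ℤ) => ∑ l ∈ L, M j l * z l)
    (fun D hD => ih J' (fun j hj => (hJ' j hj).2) (fun l hl => ha l (mem_insert_of_mem hl))
      (fun j hj => hM j (hJ' j hj).1)
      (fun j hj l hl => hM0 j (hJ' j hj).1 l (mem_insert_of_mem hl)) hD) hB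
  have hc : a l₀ ≠ 0 := ha l₀ (mem_insert_self l₀ L)
  have hBc := hpJ _ (Filter.inter_mem hB (hp.setOf_dvd_mem hc))
  obtain ⟨r, hr, α, hα, hrα⟩ := hBc.exists_add_sum_mem (κ := J₀) fun n j => ∑ l ∈ L, M j l * Z n l
  obtain ⟨z, hz₀, hzL⟩ : ∃ z : ℕ → ℤ, z l₀ = r / a l₀ ∧ ∀ l ∈ L, z l = ∑ n ∈ α, Z n l :=
    ⟨Function.update _ l₀ _, Function.update_self .., fun l hl =>
      Function.update_of_ne (hl₀ l hl).ne' ..⟩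
  have hz (j : ι) : ∑ l ∈ insert l₀ L, M j l * z l =
      M j l₀ * (r / a l₀) + ∑ n ∈ α, ∑ l ∈ L, M j l * Z n l := by
    rw [sum_insert hl₀L, hz₀, sum_comm]
    congr 1
    refine sum_congr rfl fun l hl => ?_
    rw [hzL l hl, mul_sum]
  refine ⟨z, fun j hj => ?_⟩
  rw [hz]
  by_cases hj₀ : lead j = l₀
  · rw [← hj₀, hM j hj, hj₀, Int.mul_ediv_cancel' hr.2]
    exact Set.image_mono Set.inter_subset_left (hrα ⟨j, mem_filter.2 ⟨hj, hj₀⟩⟩)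
  · have hj' : j ∈ J' := mem_filter.2 ⟨hj, hj₀⟩
    rw [hM0 j hj l₀ (mem_insert_self l₀ L) (hl₀ _ (hJ' j hj').2), zero_mul, zero_add]
    exact hZ α hα j hj'

end IsIdempotentUF

theorem Rat.exists_int_mul_eq {κ : Type*} (s : Finset κ) (f : κ → ℚ) :
    ∃ b : ℤ, b ≠ 0 ∧ ∃ W : κ → ℤ, ∀ k ∈ s, (W k : ℚ) = b * f k := by
  obtain ⟨⟨b, hb⟩, hbf⟩ := IsLocalization.exist_integer_multiples (nonZeroDivisors ℤ) s f
  have : ∀ k ∈ s, ∃ W : ℤ, (W : ℚ) = b * f k := fun k hk => by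
    obtain ⟨W, hW⟩ := hbf k hk
    exact ⟨W, by rw [← zsmul_eq_mul, ← hW]; rfl⟩
  choose! W hW using this
  exact ⟨b, nonZeroDivisors.ne_zero hb, W, hW⟩

def lastNonzeroDigit (P n : ℕ) : ℕ := ordCompl[P] n % P

theorem ordProj_mul_lastNonzeroDigit_add (P n : ℕ) :
    ordProj[P] n * (lastNonzeroDigit P n + P * (ordCompl[P] n / P)) = n := by
  rw [lastNonzeroDigit, Nat.mod_add_div, Nat.ordProj_mul_ordCompl_eq_self]

theorem not_dvd_lastNonzeroDigit {P n : ℕ} (hP : P.Prime) (hn : n ≠ 0) :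
    ¬P ∣ lastNonzeroDigit P n := by
  rw [lastNonzeroDigit, Nat.dvd_mod_iff dvd_rfl]
  exact Nat.not_dvd_ordCompl hP hn

theorem dvd_mul_sum_of_sum_pow_mul_eq_zero {ι : Type*} [Fintype ι] {P d : ℤ} (hP : P ≠ 0)
    (f : ι → ℕ) (y W : ι → ℤ) (m : ℕ) (hW : ∀ j, f j < m → W j = 0)
    (h : ∑ j, W j * (P ^ f j * (d + P * y j)) = 0) : P ∣ d * ∑ j with f j = m, W j := by
  -- modulo `P ^ (m + 1)` only the terms with `f j = m` survive, each as `P ^ m * d * W j`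
  have key : P ^ (m + 1) ∣
      ∑ j, (W j * (P ^ f j * (d + P * y j)) - if f j = m then P ^ m * (d * W j) else 0) := by
    refine dvd_sum fun j _ => ?_
    rcases lt_trichotomy (f j) m with hlt | heq | hgt
    · simp [hW j hlt, hlt.ne]
    · rw [if_pos heq, heq]
      exact ⟨W j * y j, by ring⟩
    · rw [if_neg hgt.ne', sub_zero]
      exact ((pow_dvd_pow P hgt).mul_right _).mul_left _
  rw [sum_sub_distrib, h, ← sum_filter, ← mul_sum, ← mul_sum, zero_sub, dvd_neg, pow_succ] at key
  exact (mul_dvd_mul_iff_left (pow_ne_zero m hP)).1 key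

theorem natCast_dvd_sum_of_lastNonzeroDigit_eq {ι : Type*} [Fintype ι] {P : ℕ} (hP : P.Prime)
    {x : ι → ℕ} (hx : ∀ j, x j ≠ 0) {d : ℕ} (hd : ∀ j, lastNonzeroDigit P (x j) = d)
    {e : ι → ℕ} (he : ∀ j k, (x j).factorization P ≤ (x k).factorization P ↔ e j ≤ e k)
    {W : ι → ℤ} (hWx : ∑ j, W j * x j = 0) {l : ℕ} (hW : ∀ j, e j < l → W j = 0) :
    (P : ℤ) ∣ ∑ j with e j = l, W j := by
  by_cases hl : ∃ j, e j = l
  swap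
  · rw [filter_false_of_mem fun j _ hj => hl ⟨j, hj⟩, sum_empty]
    exact dvd_zero _
  obtain ⟨j₀, rfl⟩ := hl
  have hlevel (j : ι) : e j = e j₀ ↔ (x j).factorization P = (x j₀).factorization P := by
    rw [le_antisymm_iff, le_antisymm_iff, he, he]
  have hbelow (j : ι) (hj : (x j).factorization P < (x j₀).factorization P) : W j = 0 :=
    hW j (by simpa only [lt_iff_not_ge, he] using hj)
  have hdecomp (j : ι) : (x j : ℤ) = (P : ℤ) ^ (x j).factorization P *
      (d + P * ((ordCompl[P] (x j) / P : ℕ) : ℤ)) := by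
    rw [← hd j]
    exact_mod_cast (ordProj_mul_lastNonzeroDigit_add P (x j)).symm
  have hdvd := dvd_mul_sum_of_sum_pow_mul_eq_zero (Int.natCast_ne_zero.2 hP.ne_zero)
    (fun j => (x j).factorization P) _ W _ hbelow (by simpa only [hdecomp] using hWx)
  simp_rw [← hlevel] at hdvd
  refine (Int.Prime.dvd_mul' hP hdvd).resolve_left fun h => ?_
  exact not_dvd_lastNonzeroDigit hP (hx j₀) (hd j₀ ▸ Int.natCast_dvd_natCast.1 h)

theorem exists_infinite_setOf_le_iff_le {α ι : Type*} [Infinite α] [Finite ι] (f : α → ι → ℕ) :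
    ∃ e : ι → ℕ, {a | ∀ j k, f a j ≤ f a k ↔ e j ≤ e k}.Infinite := by
  obtain ⟨R, hR⟩ := Finite.exists_infinite_fiber fun a j k => f a j ≤ f a k
  have hRinf := Set.infinite_coe_iff.1 hR
  obtain ⟨a₀, ha₀⟩ := hRinf.nonempty
  refine ⟨f a₀, hRinf.mono fun a ha j k => ?_⟩
  exact iff_of_eq (congrFun (congrFun (ha.trans ha₀.symm) j) k)

section Rado

open scoped Matrix

variable {m n : Type*} [Fintype n]

theorem Matrix.mulVec_eq_sum_smul_col {R : Type*} [CommSemiring R] (A : Matrix m n R)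
    (x : n → R) : A *ᵥ x = ∑ j, x j • A.col j := by
  ext i
  simp [Matrix.mulVec, dotProduct, mul_comm]

def Matrix.IsPartitionRegular (A : Matrix m n ℚ) : Prop :=
  ∀ (r : ℕ) (C : Fin r → Set ℕ+), (⋃ i, C i) = Set.univ →
    ∃ (i : Fin r) (x : n → ℕ+), (∀ j, x j ∈ C i) ∧ A *ᵥ (fun j => ((x j : ℕ) : ℚ)) = 0

def Matrix.ColumnsCondition (A : Matrix m n ℚ) (e : n → ℕ) : Prop :=
  ∀ l, ∑ j with e j = l, A.col j ∈ Submodule.span ℚ (A.col '' {j | e j < l})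

theorem Matrix.IsPartitionRegular.exists_lastNonzeroDigit_eq {A : Matrix m n ℚ}
    (hA : A.IsPartitionRegular) {P : ℕ} (hP : 0 < P) :
    ∃ (d : ℕ) (x : n → ℕ+), (∀ j, lastNonzeroDigit P (x j) = d) ∧
      A *ᵥ (fun j => ((x j : ℕ) : ℚ)) = 0 := by
  obtain ⟨i, x, hx, hAx⟩ := hA P (fun i => {k | lastNonzeroDigit P k = i})
    (Set.eq_univ_of_forall fun k => Set.mem_iUnion.2 ⟨⟨_, Nat.mod_lt _ hP⟩, rfl⟩)
  exact ⟨i, x, hx, hAx⟩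

theorem Matrix.IsPartitionRegular.exists_columnsCondition {A : Matrix m n ℚ}
    (hA : A.IsPartitionRegular) : ∃ e, A.ColumnsCondition e := by
  choose d x hxd hAx using fun P : Nat.Primes => hA.exists_lastNonzeroDigit_eq P.2.pos
  obtain ⟨e, he⟩ := exists_infinite_setOf_le_iff_le fun (P : Nat.Primes) j =>
    (x P j : ℕ).factorization P
  refine ⟨e, fun l => ?_⟩
  by_contra hl
  obtain ⟨w, hwl, hw⟩ := Submodule.exists_dual_map_eq_bot_of_notMem hl inferInstance
  obtain ⟨b, hb, W, hW⟩ := Rat.exists_int_mul_eq univ fun j => w (A.col j)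
  have hW0 (j : n) (hj : e j < l) : W j = 0 := by
    have h := Submodule.mem_map_of_mem (f := w)
      (Submodule.subset_span (Set.mem_image_of_mem A.col (show j ∈ {j | e j < l} from hj)))
    rw [hw, Submodule.mem_bot] at h
    have := hW j (mem_univ j)
    rw [h, mul_zero] at this
    exact_mod_cast this
  have hWx (P : Nat.Primes) : ∑ j, W j * (x P j : ℕ) = 0 := by
    have h := congrArg (fun v => (b : ℚ) * w v) (hAx P)
    simp only [Matrix.mulVec_eq_sum_smul_col, map_sum, map_smul, smul_eq_mul, map_zero, mul_zero,
      mul_sum] at h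
    have hcast : ((∑ j, W j * (x P j : ℕ) : ℤ) : ℚ) = ∑ j, b * ((x P j : ℕ) * w (A.col j)) := by
      push_cast
      exact sum_congr rfl fun j _ => by rw [hW j (mem_univ j)]; ring
    exact_mod_cast hcast.trans h
  have hS : ∑ j with e j = l, W j ≠ 0 := by
    have : ((∑ j with e j = l, W j : ℤ) : ℚ) = b * w (∑ j with e j = l, A.col j) := by
      push_cast
      rw [map_sum, mul_sum]
      exact sum_congr rfl fun j _ => hW j (mem_univ j)
    exact_mod_cast this.trans_ne (mul_ne_zero (by exact_mod_cast hb) hwl)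
  obtain ⟨_, ⟨P, hPe, rfl⟩, hPS⟩ :=
    (he.image Subtype.val_injective.injOn).exists_gt (∑ j with e j = l, W j).natAbs
  exact hS (Int.eq_zero_of_dvd_of_natAbs_lt_natAbs
    (natCast_dvd_sum_of_lastNonzeroDigit_eq P.2 (fun j => (x P j).ne_zero) (hxd P) hPe (hWx P) hW0)
    (by simpa using hPS))

theorem Matrix.ColumnsCondition.exists_mulVec_eq_zero {A : Matrix m n ℚ} {e : n → ℕ}
    (hA : A.ColumnsCondition e) (l : ℕ) :
    ∃ g : n → ℚ, A *ᵥ g = 0 ∧ (∀ j, e j = l → g j = 1) ∧ ∀ j, l < e j → g j = 0 := by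
  obtain ⟨c, hc, hcl⟩ := (Finsupp.mem_span_image_iff_linearCombination ℚ).1 (hA l)
  have hc0 (j : n) (hj : ¬e j < l) : c j = 0 :=
    Finsupp.notMem_support_iff.1 fun h => hj ((Finsupp.mem_supported ℚ c).1 hc h)
  refine ⟨fun j => (if e j = l then 1 else 0) - c j, ?_, fun j hj => ?_, fun j hj => ?_⟩
  · rw [Matrix.mulVec_eq_sum_smul_col]
    simp only [sub_smul, sum_sub_distrib, ite_smul, one_smul, zero_smul, ← sum_filter]
    rw [← hcl, Finsupp.linearCombination_apply,
      Finsupp.sum_fintype _ (fun i a => a • A.col i) fun _ => zero_smul ℚ _, sub_self]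
  · simp [hj, hc0 j hj.not_lt]
  · simp [hj.ne', hc0 j (lt_asymm hj)]

theorem Matrix.ColumnsCondition.exists_int_mulVec_eq_zero {A : Matrix m n ℚ} {e : n → ℕ}
    (hA : A.ColumnsCondition e) :
    ∃ c : ℤ, c ≠ 0 ∧ ∃ M : n → ℕ → ℤ, (∀ j, M j (e j) = c) ∧
      (∀ j, ∀ l ∈ univ.image e, l < e j → M j l = 0) ∧
      ∀ l ∈ univ.image e, A *ᵥ (fun j => (M j l : ℚ)) = 0 := by
  choose g hgA hg1 hg0 using hA.exists_mulVec_eq_zero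
  obtain ⟨c, hc, W, hW⟩ := Rat.exists_int_mul_eq (univ.image e ×ˢ univ) fun lj => g lj.1 lj.2
  have hM (j : n) (l : ℕ) (hl : l ∈ univ.image e) : (W (l, j) : ℚ) = c * g l j :=
    hW (l, j) (mem_product.2 ⟨hl, mem_univ j⟩)
  refine ⟨c, hc, fun j l => W (l, j), fun j => ?_, fun j l hl hlj => ?_, fun l hl => ?_⟩
  · have h := hM j _ (mem_image_of_mem e (mem_univ j))
    rw [hg1 _ j rfl, mul_one] at h
    exact_mod_cast h
  · have h := hM j l hl
    rw [hg0 l j hlj, mul_zero] at h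
    exact_mod_cast h
  · have : (fun j => (W (l, j) : ℚ)) = (c : ℚ) • g l := funext fun j => hM j l hl
    rw [this, Matrix.mulVec_smul, hgA, smul_zero]

end Rado

/-- Rado systems are solvable in C-sets: if the homogeneous system `A x = 0`
(`A` a `p × q` matrix over `ℚ`) is partition regular over `ℕ₊`, then for every
C-set `F` it has a solution with all components in `F`. -/
theorem rado_solvable_in_csets (p q : ℕ) (A : Matrix (Fin p) (Fin q) ℚ)
    (hpr : ∀ (r : ℕ) (C : Fin r → Set ℕ+), (⋃ i, C i) = Set.univ →
      ∃ (i : Fin r) (x : Fin q → ℕ+), (∀ j, x j ∈ C i) ∧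
        A.mulVec (fun j => ((x j : ℕ) : ℚ)) = 0)
    (F : Set ℕ+) (hF : IsCSet F) :
    ∃ x : Fin q → ℕ+, (∀ j, x j ∈ F) ∧ A.mulVec (fun j => ((x j : ℕ) : ℚ)) = 0 := by
  obtain ⟨U, hU, hUJ, hFU⟩ := hF
  obtain ⟨e, he⟩ := Matrix.IsPartitionRegular.exists_columnsCondition hpr
  obtain ⟨c, hc, M, hMe, hM0, hMA⟩ := he.exists_int_mulVec_eq_zero
  obtain ⟨z, hz⟩ := hU.exists_firstEntries_mem hUJ e (fun _ => c) M (univ.image e) univ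
    (fun j _ => mem_image_of_mem e (mem_univ j)) (fun _ _ => hc) (fun j _ => hMe j)
    (fun j _ => hM0 j) hFU
  choose x hxF hx using fun j => hz j (mem_univ j)
  refine ⟨x, hxF, ?_⟩
  have hxM : (fun j => ((x j : ℕ) : ℚ)) = ∑ l ∈ univ.image e, (z l : ℚ) • fun j => (M j l : ℚ) := by
    ext j
    have := congrArg (Int.cast : ℤ → ℚ) (hx j)
    push_cast at this
    simp [this, Finset.sum_apply, mul_comm]
  rw [hxM, Matrix.mulVec_sum]
  exact sum_eq_zero fun l hl => by rw [Matrix.mulVec_smul, hMA l hl, smul_zero]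
end

section
/- Let (X,T) be an invertible dynamical system, x ∈ X, and let Y be the closure of the forward orbit {T^n x : n ∈ ℤ₊}. Then x is 𝒥-recurrent (i.e., N(x,U) = {n ∈ ℕ : T^n x ∈ U} is a J-set for every open neighborhood U of x) if and only if for every m ∈ ℕ, every sequence s : ℕ → ℤ^m, and every nonempty relatively open subset U of Y there exist a nonempty finite set α ⊆ ℕ and a point z ∈ Y such that T^{s_α(i)} z ∈ U for every i ∈ {1,…,m}. -/
open Finset

/-! `⇒`: if `T^n₀ x ∈ V`, the J-set property of `N(x, T^{-n₀} V)` gives `r, α` with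
`r + s_α i ∈ N(x, T^{-n₀} V)`, and `z = T^{r+n₀} x` works.
`⇐`: it suffices to treat sequences with positive entries, since shifting each `s n` by a
constant vector is absorbed into `r`. Multiple recurrence in `U` gives `z` in the orbit closure
with `T^{s_α i} z ∈ U` for all `i`; an orbit point `T^n x` close to `z` inherits these finitely
many open conditions, so `T^{n + s_α i} x ∈ U`. -/

theorem Equiv.Perm.zpow_apply_iterate {α : Type*} (f : Equiv.Perm α) (a : ℤ) {n k : ℕ}
    (h : (k : ℤ) = a + n) (y : α) : (f ^ a) (f^[n] y) = f^[k] y := by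
  rw [f.iterate_eq_pow, f.iterate_eq_pow, ← zpow_natCast, ← zpow_natCast, h, zpow_add,
    Equiv.Perm.mul_apply]

theorem Homeomorph.toEquiv_zpow {X : Type*} [TopologicalSpace X] (T : X ≃ₜ X) (a : ℤ) :
    (T ^ a).toEquiv = T.toEquiv ^ a :=
  map_zpow ({ toFun := Homeomorph.toEquiv, map_one' := rfl, map_mul' := fun _ _ => rfl } :
    (X ≃ₜ X) →* Equiv.Perm X) T a

theorem Homeomorph.continuous_toEquiv_zpow {X : Type*} [TopologicalSpace X] (T : X ≃ₜ X)
    (a : ℤ) : Continuous (T.toEquiv ^ a) := by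
  rw [← T.toEquiv_zpow]
  exact (T ^ a).continuous

theorem isJSet_of_forall_pos {F : Set ℕ+}
    (h : ∀ (m : ℕ) (s : ℕ+ → Fin m → ℤ), (∀ n i, 0 < s n i) →
      ∃ (r : ℕ) (α : Finset ℕ+), α.Nonempty ∧
        ∀ i : Fin m, ∃ k ∈ F, ((k : ℕ) : ℤ) = r + ∑ n ∈ α, s n i) :
    IsJSet F := by
  intro m s
  set c : ℕ+ → ℕ := fun n => ∑ j, (s n j).natAbs + 1
  have hpos : ∀ n i, 0 < s n i + c n := by
    intro n i
    have : (s n i).natAbs ≤ ∑ j, (s n j).natAbs :=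
      single_le_sum (f := fun j => (s n j).natAbs) (fun j _ => Nat.zero_le _) (mem_univ i)
    simp only [c]
    omega
  obtain ⟨r, α, hα, hrα⟩ := h m (fun n i => s n i + c n) hpos
  have hC : 0 < ∑ n ∈ α, c n := sum_pos (fun _ _ => Nat.succ_pos _) hα
  refine ⟨⟨r + ∑ n ∈ α, c n, by omega⟩, α, hα, fun i => ?_⟩
  obtain ⟨k, hkF, hk⟩ := hrα i
  refine ⟨k, hkF, ?_⟩
  rw [sum_add_distrib] at hk
  rw [PNat.mk_coe]
  push_cast at hk ⊢
  linarith

section ForwardOrbit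

variable {X : Type*} [TopologicalSpace X]

def forwardOrbitClosure (f : X → X) (x : X) : Set X :=
  closure (Set.range fun n : ℕ => f^[n] x)

theorem iterate_mem_forwardOrbitClosure (f : X → X) (x : X) (n : ℕ) :
    f^[n] x ∈ forwardOrbitClosure f x :=
  subset_closure ⟨n, rfl⟩

theorem exists_iterate_mem_of_mem_forwardOrbitClosure {f : X → X} {x z : X}
    (hz : z ∈ forwardOrbitClosure f x) {U : Set X} (hU : IsOpen U) (hzU : z ∈ U) :
    ∃ n : ℕ, f^[n] x ∈ U := by
  obtain ⟨_, hU, n, rfl⟩ := mem_closure_iff.mp hz U hU hzU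
  exact ⟨n, hU⟩

variable (T : X ≃ₜ X) (x : X)

theorem multiple_recurrence_of_jrecurrent
    (hrec : ∀ U : Set X, IsOpen U → x ∈ U → IsJSet {n : ℕ+ | T^[(n : ℕ)] x ∈ U})
    (m : ℕ) (s : ℕ+ → Fin m → ℤ) {V : Set X} (hV : IsOpen V)
    (hVY : (V ∩ forwardOrbitClosure T x).Nonempty) :
    ∃ α : Finset ℕ+, α.Nonempty ∧ ∃ z ∈ forwardOrbitClosure T x,
      ∀ i : Fin m, (T.toEquiv ^ (∑ n ∈ α, s n i)) z ∈ V ∩ forwardOrbitClosure T x := by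
  obtain ⟨y, hyV, hyY⟩ := hVY
  obtain ⟨n₀, hn₀⟩ := exists_iterate_mem_of_mem_forwardOrbitClosure hyY hV hyV
  obtain ⟨r, α, hα, hrα⟩ :=
    hrec (T^[n₀] ⁻¹' V) (hV.preimage (T.continuous.iterate n₀)) hn₀ m s
  refine ⟨α, hα, T^[r + n₀] x, iterate_mem_forwardOrbitClosure _ _ _, fun i => ?_⟩
  obtain ⟨k, hkU, hk⟩ := hrα i
  have hshift : (T.toEquiv ^ (∑ n ∈ α, s n i)) (T^[r + n₀] x) = T^[n₀ + k] x :=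
    Equiv.Perm.zpow_apply_iterate T.toEquiv _ (by push_cast; linarith) x
  refine hshift ▸ ⟨?_, iterate_mem_forwardOrbitClosure _ _ _⟩
  rwa [Function.iterate_add_apply]

theorem jrecurrent_of_multiple_recurrence
    (hmult : ∀ (m : ℕ) (s : ℕ+ → Fin m → ℤ) (V : Set X), IsOpen V →
      (V ∩ forwardOrbitClosure T x).Nonempty →
        ∃ α : Finset ℕ+, α.Nonempty ∧ ∃ z ∈ forwardOrbitClosure T x,
          ∀ i : Fin m, (T.toEquiv ^ (∑ n ∈ α, s n i)) z ∈ V ∩ forwardOrbitClosure T x)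
    {U : Set X} (hU : IsOpen U) (hxU : x ∈ U) :
    IsJSet {n : ℕ+ | T^[(n : ℕ)] x ∈ U} := by
  refine isJSet_of_forall_pos fun m s hs => ?_
  obtain ⟨α, hα, z, hzY, hz⟩ :=
    hmult m s U hU ⟨x, hxU, iterate_mem_forwardOrbitClosure T x 0⟩
  obtain ⟨n, hn⟩ := exists_iterate_mem_of_mem_forwardOrbitClosure hzY
    (isOpen_iInter_of_finite fun i => hU.preimage (T.continuous_toEquiv_zpow (∑ n ∈ α, s n i)))
    (Set.mem_iInter.mpr fun i => (hz i).1)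
  refine ⟨n, α, hα, fun i => ?_⟩
  have hsum : 0 < ∑ n ∈ α, s n i := sum_pos (fun n _ => hs n i) hα
  refine ⟨⟨(n + ∑ n ∈ α, s n i).toNat, by omega⟩, ?_, by rw [PNat.mk_coe]; omega⟩
  have hk : ((n + ∑ n ∈ α, s n i).toNat : ℤ) = ∑ n ∈ α, s n i + n := by omega
  have hshift := Equiv.Perm.zpow_apply_iterate T.toEquiv _ hk x
  rw [Homeomorph.coe_toEquiv] at hshift
  show T^[(n + ∑ n ∈ α, s n i).toNat] x ∈ U
  exact hshift ▸ Set.mem_iInter.mp hn i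

end ForwardOrbit

theorem jrecurrent_iff_multiple_ip_recurrence_general
    {X : Type*} [TopologicalSpace X]
    (T : X ≃ₜ X) (x : X) (Y : Set X)
    (hY : Y = closure (Set.range fun n : ℕ => T^[n] x)) :
    (∀ U : Set X, IsOpen U → x ∈ U → IsJSet {n : ℕ+ | T^[(n : ℕ)] x ∈ U}) ↔
      (∀ (m : ℕ) (s : ℕ+ → Fin m → ℤ) (V : Set X), IsOpen V → (V ∩ Y).Nonempty →
        ∃ α : Finset ℕ+, α.Nonempty ∧ ∃ z ∈ Y,
          ∀ i : Fin m, (T.toEquiv ^ (∑ n ∈ α, s n i)) z ∈ V ∩ Y) := by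
  subst hY
  exact ⟨fun hrec m s _ hV hVY => multiple_recurrence_of_jrecurrent T x hrec m s hV hVY,
    fun hmult _ hU hxU => jrecurrent_of_multiple_recurrence T x hmult hU hxU⟩

/-- Let `(X, T)` be an invertible dynamical system, `x ∈ X`, and `Y` the closure of the
forward orbit of `x`. Then `x` is 𝒥-recurrent (`N(x, U)` is a J-set for every open
neighborhood `U` of `x`) iff for every `m`, every sequence `s : ℕ₊ → ℤ^m` and every
nonempty relatively open subset `V ∩ Y` of `Y` there exist a nonempty finite `α` and a
point `z ∈ Y` with `T^(s_α i) z ∈ V ∩ Y` for every `i`. -/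
theorem jrecurrent_iff_multiple_ip_recurrence
    {X : Type*} [TopologicalSpace X] [CompactSpace X] [T2Space X] [Nonempty X]
    (T : X ≃ₜ X) (x : X) (Y : Set X)
    (hY : Y = closure (Set.range fun n : ℕ => T^[n] x)) :
    (∀ U : Set X, IsOpen U → x ∈ U → IsJSet {n : ℕ+ | T^[(n : ℕ)] x ∈ U}) ↔
      (∀ (m : ℕ) (s : ℕ+ → Fin m → ℤ) (V : Set X), IsOpen V → (V ∩ Y).Nonempty →
        ∃ α : Finset ℕ+, α.Nonempty ∧ ∃ z ∈ Y,
          ∀ i : Fin m, (T.toEquiv ^ (∑ n ∈ α, s n i)) z ∈ V ∩ Y) :=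
  jrecurrent_iff_multiple_ip_recurrence_general T x Y hY
end

section
/- Let (X,T) be an invertible dynamical system, x ∈ X, and n ∈ ℕ. Then x is 𝒥-recurrent for (X,T) if and only if x is 𝒥-recurrent for (X,T^n), where x is 𝒥-recurrent for a system (X,S) means that {k ∈ ℕ : S^k x ∈ U} is a J-set for every open neighborhood U of x. -/
open Finset

def pnat_add_right_emb (M : ℕ+) : ℕ+ ↪ ℕ+ :=
  ⟨fun j => j + M, by
    intro a b h
    apply PNat.coe_injective
    have := congrArg (PNat.val) h
    simp only [PNat.add_coe] at this
    omega⟩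

lemma key_induction {X : Type*} [TopologicalSpace X] (T : X → X) (hT : Continuous T)
    (x : X) (U : Set X) (hU : IsOpen U) (hx : x ∈ U)
    (H : ∀ V : Set X, IsOpen V → x ∈ V → IsJSet {k : ℕ+ | T^[(k : ℕ)] x ∈ V})
    (n : ℕ+) (m : ℕ) (s : ℕ+ → Fin m → ℤ) :
    ∀ t : ℕ, ∃ (r : ℕ → ℕ+) (α : ℕ → Finset ℕ+) (bd : ℕ+),
      (∀ u, 1 ≤ u → u ≤ t → (α u).Nonempty) ∧
      (∀ u u', u < u' → u' ≤ t → ∀ j ∈ α u, ∀ j' ∈ α u', j < j') ∧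
      (∀ u, u ≤ t → ∀ j ∈ α u, j < bd) ∧
      (∀ a b, a < b → b ≤ t → ∀ i : Fin m,
        ∃ k : ℕ+, T^[(k : ℕ)] x ∈ U ∧
          ((k : ℕ) : ℤ) = ∑ u ∈ Finset.Ioc a b,
            (((r u : ℕ) : ℤ) + ((n : ℕ) : ℤ) * ∑ j ∈ α u, s j i)) := by
  intro t
  induction t with
  | zero =>
    exact ⟨fun _ => 1, fun _ => ∅, 1, fun u h1 h2 => by omega,
      fun u u' _ _ j hj => by simp at hj,
      fun u _ j hj => by simp at hj,
      fun a b hab hb => by omega⟩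
  | succ t ih =>
    obtain ⟨r, α, bd, h1, h2, h3, h4⟩ := ih
    -- choose witnesses for intervals ending at t
    have h4' : ∀ (a : Fin t) (i : Fin m),
        ∃ k : ℕ+, T^[(k : ℕ)] x ∈ U ∧
          ((k : ℕ) : ℤ) = ∑ u ∈ Finset.Ioc (a : ℕ) t,
            (((r u : ℕ) : ℤ) + ((n : ℕ) : ℤ) * ∑ j ∈ α u, s j i) :=
      fun a i => h4 a t a.isLt le_rfl i
    choose k hk1 hk2 using h4'
    set V : Set X := U ∩ ⋂ (p : Fin t × Fin m), (T^[(k p.1 p.2 : ℕ)]) ⁻¹' U with hV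
    have hVopen : IsOpen V :=
      hU.inter (isOpen_iInter_of_finite fun p => hU.preimage (hT.iterate _))
    have hxV : x ∈ V := ⟨hx, Set.mem_iInter.mpr fun p => hk1 p.1 p.2⟩
    obtain ⟨r', α'', hne, hw⟩ := H V hVopen hxV m
      (fun j i => ((n : ℕ) : ℤ) * s (j + bd) i)
    set A : Finset ℕ+ := α''.map (pnat_add_right_emb bd) with hA
    refine ⟨Function.update r (t+1) r', Function.update α (t+1) A,
      A.sup id + bd + 1, ?_, ?_, ?_, ?_⟩
    · intro u hu1 hu2
      rcases eq_or_lt_of_le hu2 with h | h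
      · rw [h, Function.update_self]
        exact hne.map
      · rw [Function.update_of_ne (by omega)]
        exact h1 u hu1 (by omega)
    · intro u u' huu' hu' j hj j' hj'
      rcases eq_or_lt_of_le hu' with h | h
      · have hu : u ≤ t := by omega
        rw [Function.update_of_ne (by omega)] at hj
        rw [h, Function.update_self, hA] at hj'
        obtain ⟨j'', hj'', rfl⟩ := Finset.mem_map.mp hj'
        have hjbd : j < bd := h3 u hu j hj
        calc j < bd := hjbd
          _ < pnat_add_right_emb bd j'' := by
            show bd < j'' + bd
            rw [← PNat.coe_lt_coe, PNat.add_coe]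
            have := j''.pos; omega
      · rw [Function.update_of_ne (by omega)] at hj
        rw [Function.update_of_ne (by omega)] at hj'
        exact h2 u u' huu' (by omega) j hj j' hj'
    · intro u hu j hj
      rcases eq_or_lt_of_le hu with h | h
      · rw [h, Function.update_self] at hj
        have : j ≤ A.sup id := Finset.le_sup (f := id) hj
        calc j ≤ A.sup id := this
          _ < A.sup id + bd + 1 := by
            rw [← PNat.coe_lt_coe, PNat.add_coe, PNat.add_coe, PNat.one_coe]
            omega
      · rw [Function.update_of_ne (by omega)] at hj
        have : j < bd := h3 u (by omega) j hj
        calc j < bd := this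
          _ ≤ A.sup id + bd + 1 := by
            rw [← PNat.coe_le_coe, PNat.add_coe, PNat.add_coe, PNat.one_coe]
            omega
    · intro a b hab hb i
      -- sum with updated functions over Ioc a b when b ≤ t equals old sum
      rcases eq_or_lt_of_le hb with h | h
      · subst h
        -- b = t + 1
        obtain ⟨k', hk'mem, hk'⟩ := hw i
        have hk'U : T^[(k' : ℕ)] x ∈ V := hk'mem
        have hsum' : ((k' : ℕ) : ℤ) = ((r' : ℕ) : ℤ) + ((n : ℕ) : ℤ) * ∑ j ∈ A, s j i := by
          rw [hk', hA, Finset.sum_map, Finset.mul_sum]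
          rfl
        rcases Nat.lt_or_ge a t with hat | hat
        · -- a < t : compose
          let a' : Fin t := ⟨a, hat⟩
          refine ⟨k a' i + k', ?_, ?_⟩
          · have : T^[(k a' i : ℕ) + (k' : ℕ)] x = T^[(k a' i : ℕ)] (T^[(k' : ℕ)] x) :=
              Function.iterate_add_apply T _ _ x
            rw [PNat.add_coe, this]
            have := hk'U.2
            exact Set.mem_iInter.mp this (a', i)
          · rw [PNat.add_coe, Nat.cast_add, hk2 a' i, hsum',
              Finset.sum_Ioc_succ_top (by omega : a ≤ t)]
            rw [Function.update_self, Function.update_self]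
            have : ∀ u ∈ Finset.Ioc a t,
                ((Function.update r (t+1) r' u : ℕ) : ℤ) + ((n : ℕ) : ℤ) *
                  ∑ j ∈ Function.update α (t+1) A u, s j i
                = ((r u : ℕ) : ℤ) + ((n : ℕ) : ℤ) * ∑ j ∈ α u, s j i := by
              intro u hu
              have : u ≠ t + 1 := by have := (Finset.mem_Ioc.mp hu).2; omega
              rw [Function.update_of_ne this, Function.update_of_ne this]
            rw [Finset.sum_congr rfl this]
        · -- a = t
          have ha : a = t := by omega
          subst ha
          refine ⟨k', hk'U.1, ?_⟩
          rw [hsum', Finset.sum_Ioc_succ_top le_rfl, Finset.Ioc_self,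
            Finset.sum_empty, Function.update_self]
          simp
      · obtain ⟨k₀, hk₀1, hk₀2⟩ := h4 a b hab (by omega) i
        refine ⟨k₀, hk₀1, ?_⟩
        rw [hk₀2]
        apply Finset.sum_congr rfl
        intro u hu
        have : u ≠ t + 1 := by have := (Finset.mem_Ioc.mp hu).2; omega
        rw [Function.update_of_ne this, Function.update_of_ne this]


def succEmb : ℕ ↪ ℕ+ :=
  ⟨Nat.succPNat, by
    intro a b h
    have := congrArg (fun p : ℕ+ => (p : ℕ)) h
    simp only [Nat.succPNat_coe] at this
    omega⟩

lemma easy_dir {X : Type*} [TopologicalSpace X] (T : X → X) (x : X) (n : ℕ+)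
    (H : ∀ U : Set X, IsOpen U → x ∈ U →
      IsJSet {k : ℕ+ | (T^[(n : ℕ)])^[(k : ℕ)] x ∈ U}) :
    ∀ U : Set X, IsOpen U → x ∈ U → IsJSet {k : ℕ+ | T^[(k : ℕ)] x ∈ U} := by
  intro U hU hx m s
  haveI : NeZero (n : ℕ) := NeZero.of_pos n.pos
  set Q : ℕ → Fin m → ℤ := fun M i => ∑ k ∈ Finset.range M, s k.succPNat i with hQ
  set f : ℕ → Fin m → ZMod (n : ℕ) := fun M i => ((Q M i : ℤ) : ZMod (n : ℕ)) with hf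
  obtain ⟨v, hv⟩ := Finite.exists_infinite_fiber f
  have hS : (f ⁻¹' {v}).Infinite := Set.infinite_coe_iff.mp hv
  set N : ℕ → ℕ := Nat.nth (· ∈ f ⁻¹' {v}) with hN
  have hmono : StrictMono N := Nat.nth_strictMono hS
  have hmem : ∀ j, f (N j) = v := fun j => Nat.nth_mem_of_infinite hS j
  have hdvd : ∀ (u : ℕ+) (i : Fin m),
      ((n : ℕ) : ℤ) ∣ (Q (N (u : ℕ)) i - Q (N ((u : ℕ) - 1)) i) := by
    intro u i
    have h1 := congrFun (hmem (u : ℕ)) i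
    have h2 := congrFun (hmem ((u : ℕ) - 1)) i
    rw [← ZMod.intCast_zmod_eq_zero_iff_dvd, Int.cast_sub]
    rw [hf] at h1 h2
    simp only at h1 h2
    rw [h1, h2, sub_self]
  set t : ℕ+ → Fin m → ℤ :=
    fun u i => (Q (N (u : ℕ)) i - Q (N ((u : ℕ) - 1)) i) / ((n : ℕ) : ℤ) with ht
  have hnt : ∀ u i, ((n : ℕ) : ℤ) * t u i = Q (N (u : ℕ)) i - Q (N ((u : ℕ) - 1)) i :=
    fun u i => Int.mul_ediv_cancel' (hdvd u i)
  obtain ⟨r, α, hne, hw⟩ := H U hU hx m t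
  set block : ℕ+ → Finset ℕ+ :=
    fun u => (Finset.Ico (N ((u : ℕ) - 1)) (N (u : ℕ))).map succEmb with hblock
  set β : Finset ℕ+ := α.biUnion block with hβ
  have hblockne : ∀ u : ℕ+, (block u).Nonempty := by
    intro u
    apply Finset.Nonempty.map
    apply Finset.nonempty_Ico.mpr
    exact hmono (by have := u.pos; omega)
  have hβne : β.Nonempty := by
    obtain ⟨u, hu⟩ := hne
    obtain ⟨j, hj⟩ := hblockne u
    exact ⟨j, Finset.mem_biUnion.mpr ⟨u, hu, hj⟩⟩
  have hblocksum : ∀ u i, ∑ j ∈ block u, s j i = ((n : ℕ) : ℤ) * t u i := by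
    intro u i
    rw [hblock]
    simp only
    rw [Finset.sum_map, hnt]
    exact Finset.sum_Ico_eq_sub (fun k => s k.succPNat i)
      (hmono.monotone (by omega : (u : ℕ) - 1 ≤ (u : ℕ)))
  have hdisj : (↑α : Set ℕ+).PairwiseDisjoint block := by
    have key : ∀ u u' : ℕ+, u < u' → Disjoint (block u) (block u') := by
      intro u u' h
      rw [hblock]
      simp only
      rw [Finset.disjoint_map]
      apply Finset.disjoint_left.mpr
      intro k hk hk'
      have h1 := (Finset.mem_Ico.mp hk).2
      have h2 := (Finset.mem_Ico.mp hk').1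
      have hle : N (u : ℕ) ≤ N ((u' : ℕ) - 1) := by
        apply hmono.monotone
        have : (u : ℕ) < (u' : ℕ) := h
        omega
      omega
    intro u hu u' hu' hne'
    rcases hne'.lt_or_gt with h | h
    · exact key u u' h
    · exact (key u' u h).symm
  refine ⟨n * r, β, hβne, ?_⟩
  intro i
  obtain ⟨k, hkmem, hk⟩ := hw i
  refine ⟨n * k, ?_, ?_⟩
  · show T^[((n * k : ℕ+) : ℕ)] x ∈ U
    rw [PNat.mul_coe, Function.iterate_mul]
    exact hkmem
  · have hβs : ∑ j ∈ β, s j i = ((n : ℕ) : ℤ) * ∑ u ∈ α, t u i := by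
      rw [hβ, Finset.sum_biUnion hdisj, Finset.mul_sum]
      exact Finset.sum_congr rfl fun u _ => hblocksum u i
    rw [hβs, PNat.mul_coe, PNat.mul_coe]
    push_cast
    rw [hk]
    ring

lemma hard_dir {X : Type*} [TopologicalSpace X] (T : X → X) (hT : Continuous T)
    (x : X) (n : ℕ+)
    (H : ∀ V : Set X, IsOpen V → x ∈ V → IsJSet {k : ℕ+ | T^[(k : ℕ)] x ∈ V}) :
    ∀ U : Set X, IsOpen U → x ∈ U →
      IsJSet {k : ℕ+ | (T^[(n : ℕ)])^[(k : ℕ)] x ∈ U} := by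
  intro U hU hx m s
  haveI : NeZero (n : ℕ) := NeZero.of_pos n.pos
  obtain ⟨r, α, bd, h1, h2, h3, h4⟩ := key_induction T hT x U hU hx H n m s (n : ℕ)
  obtain ⟨a, b, hab, hbn, hg⟩ : ∃ a b : ℕ, a < b ∧ b ≤ (n : ℕ) ∧
      (((∑ u ∈ Finset.Ioc 0 a, ((r u : ℕ) : ℤ)) : ℤ) : ZMod (n : ℕ)) =
      (((∑ u ∈ Finset.Ioc 0 b, ((r u : ℕ) : ℤ)) : ℤ) : ZMod (n : ℕ)) := by
    set g : Fin ((n : ℕ) + 1) → ZMod (n : ℕ) :=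
      fun c => (((∑ u ∈ Finset.Ioc 0 (c : ℕ), ((r u : ℕ) : ℤ)) : ℤ) : ZMod (n : ℕ)) with hg
    obtain ⟨c, c', hcc, heq⟩ := Fintype.exists_ne_map_eq_of_card_lt g
      (by simp [ZMod.card])
    have hvne : (c : ℕ) ≠ (c' : ℕ) := fun h => hcc (Fin.val_injective h)
    rcases Nat.lt_or_ge (c : ℕ) (c' : ℕ) with h | h
    · exact ⟨c, c', h, by omega, heq⟩
    · exact ⟨c', c, by omega, by omega, heq.symm⟩
  have hdvd : ((n : ℕ) : ℤ) ∣ ∑ u ∈ Finset.Ioc a b, ((r u : ℕ) : ℤ) := by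
    rw [← ZMod.intCast_zmod_eq_zero_iff_dvd]
    have hcons := Finset.sum_Ioc_consecutive (fun u => ((r u : ℕ) : ℤ))
      (Nat.zero_le a) (le_of_lt hab)
    have e : ∑ u ∈ Finset.Ioc a b, ((r u : ℕ) : ℤ) =
        (∑ u ∈ Finset.Ioc 0 b, ((r u : ℕ) : ℤ)) -
        (∑ u ∈ Finset.Ioc 0 a, ((r u : ℕ) : ℤ)) := by
      rw [← hcons]; ring
    rw [e, Int.cast_sub, ← hg, sub_self]
  obtain ⟨q, hq⟩ := hdvd
  have hRpos : 0 < ∑ u ∈ Finset.Ioc a b, ((r u : ℕ) : ℤ) := by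
    apply Finset.sum_pos
    · intro u _
      exact_mod_cast (r u).pos
    · exact ⟨b, Finset.mem_Ioc.mpr ⟨hab, le_rfl⟩⟩
  have hnpos : (0 : ℤ) < ((n : ℕ) : ℤ) := by exact_mod_cast n.pos
  have hqpos : 0 < q := by nlinarith
  set β : Finset ℕ+ := (Finset.Ioc a b).biUnion α with hβ
  have hdisjα : (↑(Finset.Ioc a b) : Set ℕ).PairwiseDisjoint α := by
    intro u hu u' hu' hne'
    have hub : u ≤ (n : ℕ) := le_trans (Finset.mem_Ioc.mp hu).2 hbn
    have hub' : u' ≤ (n : ℕ) := le_trans (Finset.mem_Ioc.mp hu').2 hbn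
    rcases hne'.lt_or_gt with h | h
    · exact Finset.disjoint_left.mpr fun j hj hj' =>
        absurd (h2 u u' h hub' j hj j hj') (lt_irrefl j)
    · exact Finset.disjoint_right.mpr fun j hj hj' =>
        absurd (h2 u' u h hub j hj j hj') (lt_irrefl j)
  have hβne : β.Nonempty := by
    obtain ⟨j0, hj0⟩ := h1 b (by omega) hbn
    exact ⟨j0, Finset.mem_biUnion.mpr ⟨b, Finset.mem_Ioc.mpr ⟨hab, le_rfl⟩, hj0⟩⟩
  refine ⟨⟨q.toNat, by omega⟩, β, hβne, ?_⟩
  intro i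
  obtain ⟨k, hkU, hk⟩ := h4 a b hab hbn i
  have hsplit : ((k : ℕ) : ℤ) = ((n : ℕ) : ℤ) * (q + ∑ j ∈ β, s j i) := by
    rw [hk, Finset.sum_add_distrib, ← Finset.mul_sum, hβ, Finset.sum_biUnion hdisjα, hq]
    ring
  have hKpos : 0 < q + ∑ j ∈ β, s j i := by
    have hkpos : (0 : ℤ) < ((k : ℕ) : ℤ) := by exact_mod_cast k.pos
    nlinarith
  refine ⟨⟨(q + ∑ j ∈ β, s j i).toNat, by omega⟩, ?_, ?_⟩
  · show (T^[(n : ℕ)])^[_] x ∈ U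
    rw [← Function.iterate_mul]
    show T^[(n : ℕ) * (q + ∑ j ∈ β, s j i).toNat] x ∈ U
    have hmul : (n : ℕ) * (q + ∑ j ∈ β, s j i).toNat = (k : ℕ) := by
      have : (((n : ℕ) * (q + ∑ j ∈ β, s j i).toNat : ℕ) : ℤ) = ((k : ℕ) : ℤ) := by
        push_cast [Int.toNat_of_nonneg hKpos.le]
        linarith [hsplit]
      exact_mod_cast this
    rw [hmul]
    exact hkU
  · show (((q + ∑ j ∈ β, s j i).toNat : ℕ) : ℤ) = ((q.toNat : ℕ) : ℤ) + ∑ j ∈ β, s j i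
    rw [Int.toNat_of_nonneg hKpos.le, Int.toNat_of_nonneg hqpos.le]

/-- Let `(X, T)` be an invertible dynamical system, `x ∈ X` and `n ∈ ℕ₊`. Then `x` is
𝒥-recurrent for `(X, T)` iff `x` is 𝒥-recurrent for `(X, T^n)`, where 𝒥-recurrence for
a system `(X, S)` means `{k | S^k x ∈ U}` is a J-set for every open neighborhood `U`
of `x`. -/
theorem jrecurrent_iterate
    {X : Type*} [TopologicalSpace X] [CompactSpace X] [T2Space X] [Nonempty X]
    (T : X ≃ₜ X) (x : X) (n : ℕ+) :
    (∀ U : Set X, IsOpen U → x ∈ U → IsJSet {k : ℕ+ | T^[(k : ℕ)] x ∈ U}) ↔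
      (∀ U : Set X, IsOpen U → x ∈ U →
        IsJSet {k : ℕ+ | (T^[(n : ℕ)])^[(k : ℕ)] x ∈ U}) := by
  constructor
  · intro H
    exact hard_dir (⇑T) T.continuous x n H
  · intro H
    exact easy_dir (⇑T) x n H
end

section
/- Let 𝓕 be a filterdual such that h(𝓕) is closed under the addition of ultrafilters. Then F ⊆ ℕ is an essential 𝓕-set if and only if there exist a dynamical system (X,T), points x, y ∈ X with x 𝓕-strongly proximal to y, and an open neighborhood U of y such that F = {n ∈ ℕ : T^n x ∈ U}. -/
open Finset

/-- A (Furstenberg) family on `ℕ₊`: a collection of subsets closed under supersets. -/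
def IsFamily (F : Set (Set ℕ+)) : Prop :=
  ∀ ⦃A B : Set ℕ+⦄, A ⊆ B → A ∈ F → B ∈ F

/-- A filterdual: a nonempty proper family with the Ramsey property. -/
def IsFilterdual (F : Set (Set ℕ+)) : Prop :=
  IsFamily F ∧ F.Nonempty ∧ F ≠ Set.univ ∧
    ∀ A B : Set ℕ+, A ∪ B ∈ F → A ∈ F ∨ B ∈ F

/-- `p ∈ h(F)`: every member of the ultrafilter `p` belongs to the family `F`. -/
def InHull (F : Set (Set ℕ+)) (p : Ultrafilter ℕ+) : Prop :=
  ∀ A ∈ p, A ∈ F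

/-- `h(F)` is closed under the addition of ultrafilters: whenever `p, q ∈ h(F)`,
every member of `p + q` belongs to `F` (where `A ∈ p + q ↔ {n | {m | n+m ∈ A} ∈ q} ∈ p`). -/
def HullAddClosed (F : Set (Set ℕ+)) : Prop :=
  ∀ p q : Ultrafilter ℕ+, InHull F p → InHull F q →
    ∀ A : Set ℕ+, {n : ℕ+ | {m : ℕ+ | n + m ∈ A} ∈ q} ∈ p → A ∈ F

/-- `A` is an essential `F`-set: some idempotent ultrafilter `p ∈ h(F)` has `A ∈ p`. -/
def IsEssentialSet (F : Set (Set ℕ+)) (A : Set ℕ+) : Prop :=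
  ∃ p : Ultrafilter ℕ+, IsIdempotentUF p ∧ InHull F p ∧ A ∈ p

/-- `x` is `F`-strongly proximal to `y`: for every open neighborhood `U` of `y`,
`{n ∈ ℕ₊ | T^n x ∈ U ∧ T^n y ∈ U} ∈ F`. -/
def FStronglyProximal (F : Set (Set ℕ+)) {X : Type*} [TopologicalSpace X]
    (T : X → X) (x y : X) : Prop :=
  ∀ U : Set X, IsOpen U → y ∈ U → {n : ℕ+ | T^[(n : ℕ)] x ∈ U ∧ T^[(n : ℕ)] y ∈ U} ∈ F

attribute [local instance] Ultrafilter.add Ultrafilter.addSemigroup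

lemma mem_ultra_add {p q : Ultrafilter ℕ+} {A : Set ℕ+} :
    A ∈ p + q ↔ {n : ℕ+ | {m : ℕ+ | n + m ∈ A} ∈ q} ∈ p :=
  Iff.rfl

def IsFilterSets (G : Set (Set ℕ+)) : Prop :=
  Set.univ ∈ G ∧ (∀ ⦃M N : Set ℕ+⦄, M ∈ G → M ⊆ N → N ∈ G) ∧
    (∀ ⦃M N : Set ℕ+⦄, M ∈ G → N ∈ G → M ∩ N ∈ G)

lemma empty_notMem_filterdual {F : Set (Set ℕ+)} (hfd : IsFilterdual F) : ∅ ∉ F := by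
  intro h
  apply hfd.2.2.1
  ext B
  simp only [Set.mem_univ, iff_true]
  exact hfd.1 (Set.empty_subset B) h

lemma exists_ultrafilter_inHull {F : Set (Set ℕ+)} (hfd : IsFilterdual F)
    (G₀ : Set (Set ℕ+)) (h₀ : IsFilterSets G₀) (hF : G₀ ⊆ F) :
    ∃ p : Ultrafilter ℕ+, InHull F p ∧ ∀ M ∈ G₀, M ∈ p := by
  classical
  set S : Set (Set (Set ℕ+)) := {G | IsFilterSets G ∧ G₀ ⊆ G ∧ G ⊆ F} with hS
  have hchain : ∀ c ⊆ S, IsChain (· ⊆ ·) c → c.Nonempty →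
      ∃ ub ∈ S, ∀ s ∈ c, s ⊆ ub := by
    intro c hcS hc ⟨G₁, hG₁⟩
    refine ⟨⋃₀ c, ⟨⟨Set.mem_sUnion.2 ⟨G₁, hG₁, (hcS hG₁).1.1⟩, ?_, ?_⟩, ?_, ?_⟩,
      fun s hs => Set.subset_sUnion_of_mem hs⟩
    · rintro M N ⟨G, hG, hM⟩ hMN
      exact ⟨G, hG, (hcS hG).1.2.1 hM hMN⟩
    · rintro M N ⟨G, hG, hM⟩ ⟨G', hG', hN⟩
      rcases eq_or_ne G G' with rfl | hne
      · exact ⟨G, hG, (hcS hG).1.2.2 hM hN⟩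
      · rcases hc hG hG' hne with h | h
        · exact ⟨G', hG', (hcS hG').1.2.2 (h hM) hN⟩
        · exact ⟨G, hG, (hcS hG).1.2.2 hM (h hN)⟩
    · exact (hcS hG₁).2.1.trans (Set.subset_sUnion_of_mem hG₁)
    · rintro M ⟨G, hG, hM⟩
      exact (hcS hG).2.2 hM
  obtain ⟨G, -, hGS, hGmax⟩ :=
    zorn_subset_nonempty S hchain G₀ ⟨h₀, subset_rfl, hF⟩
  -- G is a maximal F-filter containing G₀; show it is an ultrafilter (as a set system)
  have hemp : ∅ ∉ G := fun h => empty_notMem_filterdual hfd (hGS.2.2 h)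
  have hdich : ∀ D : Set ℕ+, D ∈ G ∨ Dᶜ ∈ G := by
    intro D
    by_contra h
    push_neg at h
    obtain ⟨hD, hD'⟩ := h
    have key : ∀ D' : Set ℕ+, D' ∉ G → ∃ E ∈ G, E ∩ D' ∉ F := by
      intro D' hD'G
      by_contra hk
      push_neg at hk
      set G' : Set (Set ℕ+) := {M | ∃ E ∈ G, E ∩ D' ⊆ M} with hG'
      have hG'S : G' ∈ S := by
        refine ⟨⟨⟨Set.univ, hGS.1.1, Set.subset_univ _⟩, ?_, ?_⟩, ?_, ?_⟩
        · rintro M N ⟨E, hE, hsub⟩ hMN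
          exact ⟨E, hE, hsub.trans hMN⟩
        · rintro M N ⟨E, hE, hsub⟩ ⟨E', hE', hsub'⟩
          refine ⟨E ∩ E', hGS.1.2.2 hE hE', Set.subset_inter ?_ ?_⟩
          · exact fun z hz => hsub ⟨hz.1.1, hz.2⟩
          · exact fun z hz => hsub' ⟨hz.1.2, hz.2⟩
        · intro M hM
          exact ⟨M, hGS.2.1 hM, Set.inter_subset_left⟩
        · rintro M ⟨E, hE, hsub⟩
          exact hfd.1 hsub (hk E hE)
      have hsub : G ⊆ G' := fun M hM => ⟨M, hM, Set.inter_subset_left⟩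
      have := hGmax hG'S hsub
      exact hD'G (this ⟨Set.univ, hGS.1.1, by simp⟩)
    obtain ⟨E, hE, hED⟩ := key D hD
    obtain ⟨E', hE', hE'D⟩ := key Dᶜ hD'
    have hEE' : E ∩ E' ∈ F := hGS.2.2 (hGS.1.2.2 hE hE')
    have hsplit : (E ∩ E' ∩ D) ∪ (E ∩ E' ∩ Dᶜ) = E ∩ E' :=
      Set.inter_union_compl _ _
    rcases hfd.2.2.2 _ _ (by rw [hsplit]; exact hEE') with h1 | h1
    · exact hED (hfd.1 (fun z hz => ⟨hz.1.1, hz.2⟩) h1)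
    · exact hE'D (hfd.1 (fun z hz => ⟨hz.1.2, hz.2⟩) h1)
  -- build the ultrafilter
  set Gf : Filter ℕ+ :=
    { sets := G
      univ_sets := hGS.1.1
      sets_of_superset := fun hM hMN => hGS.1.2.1 hM hMN
      inter_sets := fun hM hN => hGS.1.2.2 hM hN } with hGf
  have hmem : ∀ M : Set ℕ+, M ∈ Gf ↔ M ∈ G := fun _ => Iff.rfl
  have hcompl : ∀ s : Set ℕ+, sᶜ ∉ Gf ↔ s ∈ Gf := by
    intro s
    constructor
    · intro h
      rcases hdich s with h' | h'
      · exact h'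
      · exact absurd h' h
    · intro hs hsc
      have : s ∩ sᶜ ∈ G := hGS.1.2.2 hs hsc
      rw [Set.inter_compl_self] at this
      exact hemp this
  refine ⟨Ultrafilter.ofComplNotMemIff Gf hcompl, ?_, ?_⟩
  · intro M hM
    exact hGS.2.2 hM
  · intro M hM
    exact hGS.2.1 hM

lemma shift_iterate (n : ℕ) (f : ℕ → Bool) (k : ℕ) :
    (fun (g : ℕ → Bool) (j : ℕ) => g (j + 1))^[n] f k = f (k + n) := by
  induction n generalizing f k with
  | zero => simp
  | succ n ih =>
      rw [Function.iterate_succ_apply, ih]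
      simp [Nat.add_assoc]

lemma essential_forward {F : Set (Set ℕ+)} (hfam : IsFamily F) {A : Set ℕ+}
    (h : IsEssentialSet F A) :
    ∃ (X : Type) (_ : TopologicalSpace X) (T : X → X) (x y : X) (U : Set X),
      Nonempty X ∧ CompactSpace X ∧ T2Space X ∧ Continuous T ∧
      FStronglyProximal F T x y ∧ IsOpen U ∧ y ∈ U ∧
      A = {n : ℕ+ | T^[(n : ℕ)] x ∈ U} := by
  classical
  obtain ⟨p, hp, hhull, hAp⟩ := h
  set T : (ℕ → Bool) → (ℕ → Bool) := fun g j => g (j + 1) with hT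
  set x : ℕ → Bool := fun k => decide (∃ m : ℕ+, (m : ℕ) = k ∧ m ∈ A) with hxdef
  have hx : ∀ n : ℕ+, (x (n : ℕ) = true ↔ n ∈ A) := by
    intro n
    simp only [hxdef, decide_eq_true_eq]
    constructor
    · rintro ⟨m, hm, hmA⟩
      rwa [show m = n from PNat.coe_injective hm] at hmA
    · exact fun hn => ⟨n, rfl, hn⟩
  set y : ℕ → Bool := fun k => decide ({n : ℕ+ | x (k + (n : ℕ)) = true} ∈ p) with hydef
  have hy : ∀ k : ℕ, (y k = true ↔ {n : ℕ+ | x (k + (n : ℕ)) = true} ∈ p) := by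
    intro k; simp [hydef]
  set U : Set (ℕ → Bool) := {f | f 0 = true} with hU
  have hiter : ∀ (n : ℕ) (f : ℕ → Bool) (k : ℕ), T^[n] f k = f (k + n) := shift_iterate
  refine ⟨ℕ → Bool, inferInstance, T, x, y, U, ⟨fun _ => false⟩, inferInstance,
    inferInstance, ?_, ?_, ?_, ?_, ?_⟩
  · -- continuity
    exact continuous_pi fun j => continuous_apply (j + 1)
  · -- strong proximality
    intro V hVopen hyV
    obtain ⟨I, u, hu, hsub⟩ := isOpen_pi_iff.mp hVopen y hyV
    have key : ∀ k ∈ I, {n : ℕ+ | x (k + (n : ℕ)) = y k} ∈ p ∧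
        {n : ℕ+ | y (k + (n : ℕ)) = y k} ∈ p := by
      intro k _
      constructor
      · rcases hyk : y k with _ | _
        · -- y k = false
          have hnot : {n : ℕ+ | x (k + (n : ℕ)) = true} ∉ p := by
            intro hmem
            rw [(hy k).mpr hmem] at hyk
            exact Bool.noConfusion hyk
          have := Ultrafilter.compl_mem_iff_notMem.mpr hnot
          have heq : {n : ℕ+ | x (k + (n : ℕ)) = true}ᶜ
              = {n : ℕ+ | x (k + (n : ℕ)) = false} := by
            ext n; simp [Bool.not_eq_true]
          rwa [heq] at this
        · exact (hy k).mp hyk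
      · -- the y-part, uses idempotence
        set Ak : Set ℕ+ := {j : ℕ+ | x (k + (j : ℕ)) = true} with hAk
        have hyk2 : ∀ n : ℕ+, (y (k + (n : ℕ)) = true ↔
            {m : ℕ+ | n + m ∈ Ak} ∈ p) := by
          intro n
          rw [hy (k + (n : ℕ))]
          have : {m : ℕ+ | x (k + (n : ℕ) + (m : ℕ)) = true}
              = {m : ℕ+ | n + m ∈ Ak} := by
            ext m
            simp only [hAk, Set.mem_setOf_eq, PNat.add_coe, Nat.add_assoc]
          rw [this]
        have hidem := hp Ak
        rcases hyk : y k with _ | _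
        · -- y k = false
          have hAknot : Ak ∉ p := by
            intro hmem
            rw [(hy k).mpr hmem] at hyk
            exact Bool.noConfusion hyk
          have hDnot : {n : ℕ+ | {m : ℕ+ | n + m ∈ Ak} ∈ p} ∉ p := fun hd =>
            hAknot (hidem.mp hd)
          have := Ultrafilter.compl_mem_iff_notMem.mpr hDnot
          have heq : {n : ℕ+ | {m : ℕ+ | n + m ∈ Ak} ∈ p}ᶜ
              = {n : ℕ+ | y (k + (n : ℕ)) = false} := by
            ext n
            simp only [Set.mem_compl_iff, Set.mem_setOf_eq, ← hyk2 n, Bool.not_eq_true]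
          rwa [heq] at this
        · have hAkmem : Ak ∈ p := (hy k).mp hyk
          have hD := hidem.mpr hAkmem
          have heq : {n : ℕ+ | {m : ℕ+ | n + m ∈ Ak} ∈ p}
              = {n : ℕ+ | y (k + (n : ℕ)) = true} := by
            ext n
            simp only [Set.mem_setOf_eq, ← hyk2 n]
          rwa [heq] at hD
    have hbig : (⋂ k ∈ I, ({n : ℕ+ | x (k + (n : ℕ)) = y k}
        ∩ {n : ℕ+ | y (k + (n : ℕ)) = y k})) ∈ p := by
      rw [← Ultrafilter.mem_coe, Filter.biInter_finset_mem]
      intro k hk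
      exact Filter.inter_mem (key k hk).1 (key k hk).2
    apply hfam _ (hhull _ hbig)
    intro n hn
    simp only [Set.mem_iInter, Set.mem_inter_iff, Set.mem_setOf_eq] at hn
    constructor
    · apply hsub
      intro k hk
      rw [hiter]
      rw [(hn k hk).1]
      exact (hu k hk).2
    · apply hsub
      intro k hk
      rw [hiter]
      rw [(hn k hk).2]
      exact (hu k hk).2
  · -- U open
    have : U = (fun f : ℕ → Bool => f 0) ⁻¹' {true} := by
      ext f; simp [hU]
    rw [this]
    exact (isOpen_discrete _).preimage (continuous_apply 0)
  · -- y ∈ U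
    show y 0 = true
    rw [hy 0]
    have : {n : ℕ+ | x (0 + (n : ℕ)) = true} = A := by
      ext n
      simp only [Set.mem_setOf_eq, Nat.zero_add]
      exact hx n
    rwa [this]
  · -- A = {n | T^[n] x ∈ U}
    ext n
    show n ∈ A ↔ T^[(n : ℕ)] x 0 = true
    rw [hiter, Nat.zero_add, hx n]

lemma essential_backward {F : Set (Set ℕ+)} (hfd : IsFilterdual F)
    (hadd : HullAddClosed F) {A : Set ℕ+}
    (h : ∃ (X : Type) (_ : TopologicalSpace X) (T : X → X) (x y : X) (U : Set X),
      Nonempty X ∧ CompactSpace X ∧ T2Space X ∧ Continuous T ∧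
      FStronglyProximal F T x y ∧ IsOpen U ∧ y ∈ U ∧
      A = {n : ℕ+ | T^[(n : ℕ)] x ∈ U}) :
    IsEssentialSet F A := by
  classical
  obtain ⟨X, _, T, x, y, U, -, -, -, hcont, hprox, hUopen, hyU, hA⟩ := h
  set NN : Set X → Set ℕ+ :=
    fun V => {n : ℕ+ | T^[(n : ℕ)] x ∈ V ∧ T^[(n : ℕ)] y ∈ V} with hNN
  set S : Set (Ultrafilter ℕ+) :=
    {p | InHull F p ∧ ∀ V : Set X, IsOpen V → y ∈ V → NN V ∈ p} with hS
  -- S is nonempty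
  have hSne : S.Nonempty := by
    set G₀ : Set (Set ℕ+) := {M | ∃ V : Set X, IsOpen V ∧ y ∈ V ∧ NN V ⊆ M} with hG₀
    have h₀ : IsFilterSets G₀ := by
      refine ⟨⟨U, hUopen, hyU, Set.subset_univ _⟩, ?_, ?_⟩
      · rintro M N ⟨V, hV, hyV, hsub⟩ hMN
        exact ⟨V, hV, hyV, hsub.trans hMN⟩
      · rintro M N ⟨V, hV, hyV, hsub⟩ ⟨V', hV', hyV', hsub'⟩
        refine ⟨V ∩ V', hV.inter hV', ⟨hyV, hyV'⟩, ?_⟩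
        intro n hn
        exact ⟨hsub ⟨hn.1.1, hn.2.1⟩, hsub' ⟨hn.1.2, hn.2.2⟩⟩
    have hF₀ : G₀ ⊆ F := by
      rintro M ⟨V, hV, hyV, hsub⟩
      exact hfd.1 hsub (hprox V hV hyV)
    obtain ⟨p, hhull, hmem⟩ := exists_ultrafilter_inHull hfd G₀ h₀ hF₀
    exact ⟨p, hhull, fun V hV hyV => hmem _ ⟨V, hV, hyV, subset_rfl⟩⟩
  -- S is compact (closed in a compact space)
  have hSclosed : IsClosed S := by
    have : S = {p : Ultrafilter ℕ+ | InHull F p} ∩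
        ⋂ V ∈ {V : Set X | IsOpen V ∧ y ∈ V}, {p : Ultrafilter ℕ+ | NN V ∈ p} := by
      ext p
      simp only [hS, Set.mem_setOf_eq, Set.mem_inter_iff, Set.mem_iInter]
      constructor
      · rintro ⟨h1, h2⟩
        exact ⟨h1, fun V hV => h2 V hV.1 hV.2⟩
      · rintro ⟨h1, h2⟩
        exact ⟨h1, fun V hV hyV => h2 V ⟨hV, hyV⟩⟩
    rw [this]
    apply IsClosed.inter
    · have : {p : Ultrafilter ℕ+ | InHull F p} =
          ⋂ M ∈ {M : Set ℕ+ | M ∉ F}, {p : Ultrafilter ℕ+ | M ∈ p}ᶜ := by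
        ext p
        simp only [Set.mem_setOf_eq, Set.mem_iInter, Set.mem_compl_iff, InHull]
        constructor
        · intro h M hM hMp
          exact hM (h M hMp)
        · intro h M hMp
          by_contra hMF
          exact h M hMF hMp
      rw [this]
      exact isClosed_biInter fun M _ => (ultrafilter_isOpen_basic M).isClosed_compl
    · exact isClosed_biInter fun V _ => ultrafilter_isClosed_basic (NN V)
  have hScompact : IsCompact S := hSclosed.isCompact
  -- S is a subsemigroup
  have hSadd : ∀ p ∈ S, ∀ q ∈ S, p + q ∈ S := by
    intro p hp q hq
    constructor
    · intro M hM
      exact hadd p q hp.1 hq.1 M (mem_ultra_add.mp hM)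
    · intro V hV hyV
      rw [mem_ultra_add]
      apply Filter.mem_of_superset (hp.2 V hV hyV)
      intro n hn
      have hW : IsOpen (T^[(n : ℕ)] ⁻¹' V) := hV.preimage (hcont.iterate _)
      have hyW : y ∈ T^[(n : ℕ)] ⁻¹' V := hn.2
      apply Filter.mem_of_superset (hq.2 _ hW hyW)
      intro m hm
      constructor
      · show T^[((n + m : ℕ+) : ℕ)] x ∈ V
        rw [PNat.add_coe, Function.iterate_add_apply]
        exact hm.1
      · show T^[((n + m : ℕ+) : ℕ)] y ∈ V
        rw [PNat.add_coe, Function.iterate_add_apply]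
        exact hm.2
  obtain ⟨p, hpS, hpp⟩ := exists_idempotent_in_compact_add_subsemigroup
    (fun r => Ultrafilter.continuous_add_left r) S hSne hScompact hSadd
  refine ⟨p, ?_, hpS.1, ?_⟩
  · intro B
    have h1 : B ∈ p + p ↔ {n : ℕ+ | {m : ℕ+ | n + m ∈ B} ∈ p} ∈ p := mem_ultra_add
    rw [hpp] at h1
    exact h1.symm
  · rw [hA]
    apply Filter.mem_of_superset (hpS.2 U hUopen hyU)
    intro n hn
    exact hn.1

/-- For a filterdual `F` whose hull is closed under addition of ultrafilters:
`A ⊆ ℕ₊` is an essential `F`-set iff there are a dynamical system `(X, T)`, points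
`x, y ∈ X` with `x` `F`-strongly proximal to `y`, and an open neighborhood `U` of `y`
with `A = {n | T^n x ∈ U}`. -/

theorem essential_set_dynamical_characterization (F : Set (Set ℕ+))
    (hfd : IsFilterdual F) (hadd : HullAddClosed F) (A : Set ℕ+) :
    IsEssentialSet F A ↔
      ∃ (X : Type) (_ : TopologicalSpace X) (T : X → X) (x y : X) (U : Set X),
        Nonempty X ∧ CompactSpace X ∧ T2Space X ∧ Continuous T ∧
        FStronglyProximal F T x y ∧ IsOpen U ∧ y ∈ U ∧
        A = {n : ℕ+ | T^[(n : ℕ)] x ∈ U} := by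
  exact ⟨fun h => essential_forward hfd.1 h, fun h => essential_backward hfd hadd h⟩
end

section
/- Let 𝓕 be a filterdual such that h(𝓕) is closed under the addition of ultrafilters, let (X,T) be a dynamical system and x ∈ X. Then the following are equivalent: (1) x is 𝓕-recurrent; (2) there exists an idempotent ultrafilter u ∈ h(𝓕) such that for every open neighborhood U of x the set {n ∈ ℕ : T^n x ∈ U} belongs to u; (3) for every open neighborhood U of x the set {n ∈ ℕ : T^n x ∈ U} is an essential 𝓕-set. -/
open Finset

/-- `x` is an `F`-recurrent point of the system `(X, T)`:
`N(x, U) = {n ∈ ℕ₊ | T^n x ∈ U} ∈ F` for every open neighborhood `U` of `x`. -/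
def FRecurrent (F : Set (Set ℕ+)) {X : Type*} [TopologicalSpace X] (T : X → X) (x : X) : Prop :=
  ∀ U : Set X, IsOpen U → x ∈ U → {n : ℕ+ | T^[(n : ℕ)] x ∈ U} ∈ F

attribute [local instance] Ultrafilter.add Ultrafilter.addSemigroup

/-- The filter dual to a filterdual family: `A ∈ G ↔ Aᶜ ∉ F`. -/
def dualFilter (F : Set (Set ℕ+)) (hfd : IsFilterdual F) : Filter ℕ+ where
  sets := {A | Aᶜ ∉ F}
  univ_sets := by
    intro h
    apply hfd.2.2.1
    ext A
    simp only [Set.mem_univ, iff_true]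
    exact hfd.1 (Set.empty_subset A) (by simpa using h)
  sets_of_superset := fun hA hAB h => hA (hfd.1 (Set.compl_subset_compl.mpr hAB) h)
  inter_sets := fun {A B} hA hB h => by
    rw [Set.compl_inter] at h
    rcases hfd.2.2.2 _ _ h with h' | h'
    exacts [hA h', hB h']

theorem dualFilter_compat (F : Set (Set ℕ+)) (hfd : IsFilterdual F)
    {A B : Set ℕ+} (hA : A ∈ F) (hB : B ∈ dualFilter F hfd) : (A ∩ B).Nonempty := by
  by_contra h
  rw [Set.not_nonempty_iff_eq_empty] at h
  exact hB (hfd.1 (Set.subset_compl_iff_disjoint_right.mpr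
    (Set.disjoint_iff_inter_eq_empty.mpr h)) hA)


/-- For a filterdual `F` whose hull is closed under addition of ultrafilters, and a
dynamical system `(X, T)` with `x ∈ X`, the following are equivalent:
(1) `x` is `F`-recurrent; (2) there is an idempotent `u ∈ h(F)` with `N(x, U) ∈ u`
for every open neighborhood `U` of `x`; (3) `N(x, U)` is an essential `F`-set for
every open neighborhood `U` of `x`. -/
theorem frecurrent_iff_idempotent (F : Set (Set ℕ+))
    (hfd : IsFilterdual F) (hadd : HullAddClosed F)
    {X : Type*} [TopologicalSpace X] [CompactSpace X] [T2Space X] [Nonempty X]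
    (T : X → X) (hT : Continuous T) (x : X) :
    (FRecurrent F T x ↔
      ∃ u : Ultrafilter ℕ+, IsIdempotentUF u ∧ InHull F u ∧
        ∀ U : Set X, IsOpen U → x ∈ U → {n : ℕ+ | T^[(n : ℕ)] x ∈ U} ∈ u) ∧
    (FRecurrent F T x ↔
      ∀ U : Set X, IsOpen U → x ∈ U →
        IsEssentialSet F {n : ℕ+ | T^[(n : ℕ)] x ∈ U}) := by
  set N : Set X → Set ℕ+ := fun U => {n : ℕ+ | T^[(n : ℕ)] x ∈ U} with hNdef
  have key : FRecurrent F T x → ∃ u : Ultrafilter ℕ+, IsIdempotentUF u ∧ InHull F u ∧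
      ∀ U : Set X, IsOpen U → x ∈ U → N U ∈ u := by
    intro hrec
    set S : Set (Ultrafilter ℕ+) :=
      {p | InHull F p ∧ ∀ U : Set X, IsOpen U → x ∈ U → N U ∈ p} with hSdef
    haveI : Nonempty {U : Set X // IsOpen U ∧ x ∈ U} := ⟨⟨Set.univ, isOpen_univ, trivial⟩⟩
    set H : Filter ℕ+ :=
      ⨅ U : {U : Set X // IsOpen U ∧ x ∈ U}, Filter.principal (N U.1) with hHdef
    have hdir : Directed (· ≥ ·)
        fun U : {U : Set X // IsOpen U ∧ x ∈ U} => Filter.principal (N U.1) := by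
      rintro ⟨U, hU, hxU⟩ ⟨V, hV, hxV⟩
      refine ⟨⟨U ∩ V, hU.inter hV, ⟨hxU, hxV⟩⟩, ?_, ?_⟩
      · exact Filter.principal_mono.mpr fun n hn => hn.1
      · exact Filter.principal_mono.mpr fun n hn => hn.2
    have memH : ∀ s : Set ℕ+, s ∈ H ↔
        ∃ U : {U : Set X // IsOpen U ∧ x ∈ U}, N U.1 ⊆ s := by
      intro s
      rw [hHdef, Filter.mem_iInf_of_directed hdir]
      simp [Filter.mem_principal]
    have hGH : Filter.NeBot (dualFilter F hfd ⊓ H) := by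
      rw [Filter.inf_neBot_iff]
      intro s hs t ht
      obtain ⟨U, hUt⟩ := (memH t).mp ht
      have hNU : N U.1 ∈ F := hrec U.1 U.2.1 U.2.2
      obtain ⟨n, hn1, hn2⟩ := dualFilter_compat F hfd hNU hs
      exact ⟨n, hn2, hUt hn1⟩
    obtain ⟨p, hp⟩ := Ultrafilter.exists_le (dualFilter F hfd ⊓ H)
    have hpG : (p : Filter ℕ+) ≤ dualFilter F hfd := hp.trans inf_le_left
    have hpH : (p : Filter ℕ+) ≤ H := hp.trans inf_le_right
    have hInHull : ∀ q : Ultrafilter ℕ+, (q : Filter ℕ+) ≤ dualFilter F hfd → InHull F q := by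
      intro q hq A hA
      by_contra hAF
      have hAc : Aᶜ ∈ dualFilter F hfd := by
        show Aᶜᶜ ∉ F
        rwa [compl_compl]
      have : Aᶜ ∈ q := hq hAc
      exact (Ultrafilter.compl_mem_iff_notMem.mp this) hA
    have hpS : p ∈ S := by
      refine ⟨hInHull p hpG, fun U hU hx => ?_⟩
      exact hpH ((memH (N U)).mpr ⟨⟨U, hU, hx⟩, subset_rfl⟩)
    -- S is closed
    have hSclosed : IsClosed S := by
      have h1 : {q : Ultrafilter ℕ+ | InHull F q} =
          ⋂ (A : Set ℕ+) (_ : A ∉ F), {q : Ultrafilter ℕ+ | A ∈ q}ᶜ := by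
        ext q
        simp only [Set.mem_setOf_eq, Set.mem_iInter, Set.mem_compl_iff, InHull]
        constructor
        · intro h A hA hAq
          exact hA (h A hAq)
        · intro h A hAq
          by_contra hA
          exact h A hA hAq
      have hc1 : IsClosed {q : Ultrafilter ℕ+ | InHull F q} := by
        rw [h1]
        exact isClosed_iInter fun A => isClosed_iInter fun _ =>
          (ultrafilter_isOpen_basic A).isClosed_compl
      have hc2 : IsClosed {q : Ultrafilter ℕ+ |
          ∀ U : Set X, IsOpen U → x ∈ U → N U ∈ q} := by
        have h2 : {q : Ultrafilter ℕ+ | ∀ U : Set X, IsOpen U → x ∈ U → N U ∈ q} =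
            ⋂ (U : Set X) (_ : IsOpen U) (_ : x ∈ U), {q : Ultrafilter ℕ+ | N U ∈ q} := by
          ext q; simp [Set.mem_iInter]
        rw [h2]
        exact isClosed_iInter fun U => isClosed_iInter fun _ => isClosed_iInter fun _ =>
          ultrafilter_isClosed_basic (N U)
      exact hc1.inter hc2
    -- S is closed under addition
    have hSadd : ∀ q ∈ S, ∀ r ∈ S, q + r ∈ S := by
      rintro q ⟨hq1, hq2⟩ r ⟨hr1, hr2⟩
      have hmem : ∀ A : Set ℕ+, A ∈ q + r ↔
          {n : ℕ+ | {m : ℕ+ | n + m ∈ A} ∈ r} ∈ q := by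
        intro A
        have := Ultrafilter.eventually_add q r (· ∈ A)
        simpa [Filter.eventually_iff] using this
      constructor
      · intro A hA
        exact hadd q r hq1 hr1 A ((hmem A).mp hA)
      · intro U hU hx
        rw [hmem]
        refine q.toFilter.mem_of_superset (hq2 U hU hx) ?_
        intro n hn
        have hV : IsOpen (T^[(n : ℕ)] ⁻¹' U) := (hT.iterate (n : ℕ)).isOpen_preimage U hU
        have hxV : x ∈ T^[(n : ℕ)] ⁻¹' U := hn
        have := hr2 _ hV hxV
        refine r.toFilter.mem_of_superset this ?_
        intro m hm
        simp only [Set.mem_setOf_eq, N, PNat.add_coe]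
        rw [Function.iterate_add_apply]
        exact hm
    obtain ⟨u, huS, huIdem⟩ := exists_idempotent_in_compact_add_subsemigroup
      Ultrafilter.continuous_add_left S ⟨p, hpS⟩ hSclosed.isCompact hSadd
    refine ⟨u, ?_, huS.1, huS.2⟩
    intro A
    have h1 : A ∈ u + u ↔ {n : ℕ+ | {m : ℕ+ | n + m ∈ A} ∈ u} ∈ u := by
      have := Ultrafilter.eventually_add u u (· ∈ A)
      simpa [Filter.eventually_iff] using this
    rw [← h1, huIdem]
  constructor
  · constructor
    · exact key
    · rintro ⟨u, _, hu, hNu⟩ U hU hx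
      exact hu _ (hNu U hU hx)
  · constructor
    · intro hrec U hU hx
      obtain ⟨u, h1, h2, h3⟩ := key hrec
      exact ⟨u, h1, h2, h3 U hU hx⟩
    · intro h U hU hx
      obtain ⟨q, _, hq, hA⟩ := h U hU hx
      exact hq _ hA
end

section
/- Let (X,T) be a dynamical system and x, y ∈ X. The following are equivalent: (1) x is strongly proximal to y, i.e., (y,y) lies in the ω-limit set of (x,y) under T×T; (2) for every open neighborhood U of y the set {n ∈ ℕ : T^n x ∈ U and T^n y ∈ U} is an IP set; (3) for every k ∈ ℕ, (y,y) lies in the ω-limit set of (x,y) under (T^k)×(T^k). -/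
open Finset

/-- `x` is strongly proximal to `y`: `(y, y)` lies in the ω-limit set of `(x, y)`
under `T × T`, i.e. for every open `W ∋ (y,y)` in `X × X` and every `m ∈ ℕ₊`
there is `n ≥ m` with `(T^n x, T^n y) ∈ W`. -/
def StronglyProximal {X : Type*} [TopologicalSpace X] (T : X → X) (x y : X) : Prop :=
  ∀ W : Set (X × X), IsOpen W → (y, y) ∈ W →
    ∀ m : ℕ+, ∃ n : ℕ+, m ≤ n ∧ (T^[(n : ℕ)] x, T^[(n : ℕ)] y) ∈ W

/-- `A ⊆ ℕ₊` is an IP set: all finite sums of some sequence in `ℕ₊` lie in `A`. -/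
def IsIPSet (A : Set ℕ+) : Prop :=
  ∃ x : ℕ+ → ℕ+, ∀ α : Finset ℕ+, α.Nonempty →
    ∃ k ∈ A, (k : ℕ) = ∑ n ∈ α, (x n : ℕ)

/-!
Shrink a neighbourhood `U` of `y` recursively: `V₀ = U` and `V_{k+1} = V_k ∩ T^{-n_k} V_k`,
where `n_k` is a time at which both `T^{n_k} x` and `T^{n_k} y` lie in `V_k`. Peeling off the
largest index shows that every finite sum of the `n_k` sends `x` and `y` into `U`, so the return
times to `U` form an IP set. Conversely, among `k + 1` partial sums of a sequence generating an
IP set two agree mod `k`, so the IP set contains arbitrarily large multiples of `k`; this gives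
strong proximality for every `T^k`, and `k = 1` closes the cycle.
-/

theorem isIPSet_iff_exists_nat_seq {A : Set ℕ+} :
    IsIPSet A ↔ ∃ s : ℕ → ℕ+, ∀ β : Finset ℕ, β.Nonempty →
      ∃ k ∈ A, (k : ℕ) = ∑ i ∈ β, (s i : ℕ) := by
  constructor
  · rintro ⟨x, hx⟩
    refine ⟨x ∘ Equiv.pnatEquivNat.symm, fun β hβ => ?_⟩
    simpa using hx (β.map Equiv.pnatEquivNat.symm.toEmbedding) (hβ.map)
  · rintro ⟨s, hs⟩
    refine ⟨s ∘ Equiv.pnatEquivNat, fun α hα => ?_⟩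
    simpa using hs (α.map Equiv.pnatEquivNat.toEmbedding) (hα.map)

theorem exists_sum_Ico_eq_mul (s : ℕ → ℕ) (hs : ∀ i, 0 < s i) {k : ℕ} (hk : 0 < k)
    {m : ℕ} (hm : 0 < m) :
    ∃ a b, a < b ∧ ∃ c, m ≤ c ∧ ∑ i ∈ Ico a b, s i = k * c := by
  set L := k * m
  have hL : 0 < L := Nat.mul_pos hk hm
  set P : ℕ → ℕ := fun j => ∑ i ∈ range (j * L), s i
  suffices key : ∀ i j, i < j → P i % k = P j % k →
      ∃ a b, a < b ∧ ∃ c, m ≤ c ∧ ∑ i ∈ Ico a b, s i = k * c by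
    -- pigeonhole: `k + 1` block sums, only `k` residues mod `k`
    obtain ⟨i, -, j, -, hij, hPij⟩ := exists_ne_map_eq_of_card_lt_of_maps_to
      (s := range (k + 1)) (t := range k) (by simp) (f := fun j => P j % k)
      (fun j _ => mem_range.mpr (Nat.mod_lt _ hk))
    rcases hij.lt_or_gt with hlt | hgt
    · exact key i j hlt hPij
    · exact key j i hgt hPij.symm
  intro i j hij hPij
  have hij' : i * L < j * L := Nat.mul_lt_mul_of_pos_right hij hL
  have hsplit : P i + ∑ n ∈ Ico (i * L) (j * L), s n = P j :=
    sum_range_add_sum_Ico s hij'.le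
  obtain ⟨c, hc⟩ : k ∣ ∑ n ∈ Ico (i * L) (j * L), s n := by
    have := (Nat.modEq_iff_dvd' (by omega)).mp hPij
    rwa [← hsplit, Nat.add_sub_cancel_left] at this
  refine ⟨i * L, j * L, hij', c, ?_, hc⟩
  have hcard : k * m ≤ k * c := by
    calc k * m ≤ j * L - i * L := by
          rw [← Nat.sub_mul]; exact Nat.le_mul_of_pos_left _ (by omega)
      _ = #(Ico (i * L) (j * L)) • 1 := by simp
      _ ≤ ∑ n ∈ Ico (i * L) (j * L), s n := card_nsmul_le_sum _ _ _ fun n _ => hs n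
      _ = k * c := hc
  exact Nat.le_of_mul_le_mul_left hcard hk

theorem IsIPSet.exists_mul_mem {A : Set ℕ+} (hA : IsIPSet A) (k m : ℕ+) :
    ∃ c : ℕ+, m ≤ c ∧ k * c ∈ A := by
  obtain ⟨s, hs⟩ := isIPSet_iff_exists_nat_seq.mp hA
  obtain ⟨a, b, hab, c, hmc, hc⟩ :=
    exists_sum_Ico_eq_mul (fun i => (s i : ℕ)) (fun i => (s i).pos) k.pos m.pos
  obtain ⟨n, hnA, hn⟩ := hs (Ico a b) (nonempty_Ico.mpr hab)
  have hc0 : 0 < c := m.pos.trans_le hmc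
  have hkc : k * c.toPNat hc0 = n := PNat.eq (by rw [PNat.mul_coe, hn, hc]; rfl)
  exact ⟨c.toPNat hc0, hmc, hkc ▸ hnA⟩

section Return

variable {X : Type*} {T : X → X} {V : ℕ → Set X} {s : ℕ → ℕ}

theorem iterate_sum_eq_of_mem (T : X → X) (s : ℕ → ℕ) {β : Finset ℕ} {a : ℕ} (ha : a ∈ β)
    (z : X) : T^[∑ i ∈ β, s i] z = T^[∑ i ∈ β.erase a, s i] (T^[s a] z) := by
  rw [← sum_erase_add β s ha, Function.iterate_add_apply]

theorem subset_preimage_iterate_sum (hV : ∀ k, V (k + 1) ⊆ V k ∩ T^[s k] ⁻¹' V k) (a : ℕ) :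
    ∀ β ⊆ range a, V a ⊆ T^[∑ i ∈ β, s i] ⁻¹' V 0 := by
  induction a with
  | zero =>
    intro β hβ
    simp [subset_empty.mp (by simpa using hβ)]
  | succ a ih =>
    intro β hβ z hz
    have hβa : β.erase a ⊆ range a := subset_insert_iff.mp (range_add_one ▸ hβ)
    by_cases ha : a ∈ β
    · rw [Set.mem_preimage, iterate_sum_eq_of_mem T s ha]
      exact ih _ hβa (hV a hz).2
    · exact ih β (erase_eq_of_notMem ha ▸ hβa) (hV a hz).1

theorem iterate_sum_mem (hV : ∀ k, V (k + 1) ⊆ V k ∩ T^[s k] ⁻¹' V k) {z : X}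
    (hz : ∀ k, T^[s k] z ∈ V k) {β : Finset ℕ} (hβ : β.Nonempty) :
    T^[∑ i ∈ β, s i] z ∈ V 0 := by
  rw [iterate_sum_eq_of_mem T s (β.max'_mem hβ)]
  exact subset_preimage_iterate_sum hV _ _
    (fun i hi => mem_range.mpr (β.lt_max'_of_mem_erase_max' hβ hi)) (hz _)

end Return

section StronglyProximal

variable {X : Type*} [TopologicalSpace X] {T : X → X} {x y : X}

theorem stronglyProximal_iff_forall_isOpen :
    StronglyProximal T x y ↔ ∀ U : Set X, IsOpen U → y ∈ U →
      ∀ m : ℕ+, ∃ n : ℕ+, m ≤ n ∧ T^[(n : ℕ)] x ∈ U ∧ T^[(n : ℕ)] y ∈ U := by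
  refine ⟨fun h U hU hyU m => h (U ×ˢ U) (hU.prod hU) ⟨hyU, hyU⟩ m, fun h W hW hyW m => ?_⟩
  obtain ⟨u, v, hu, hv, hyu, hyv, huv⟩ := isOpen_prod_iff.mp hW y y hyW
  obtain ⟨n, hmn, hx, hy⟩ := h (u ∩ v) (hu.inter hv) ⟨hyu, hyv⟩ m
  exact ⟨n, hmn, huv ⟨hx.1, hy.2⟩⟩

theorem StronglyProximal.isIPSet (hT : Continuous T) (h : StronglyProximal T x y)
    {U : Set X} (hU : IsOpen U) (hyU : y ∈ U) :
    IsIPSet {n : ℕ+ | T^[(n : ℕ)] x ∈ U ∧ T^[(n : ℕ)] y ∈ U} := by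
  have hret (V : {V : Set X // IsOpen V ∧ y ∈ V}) :
      ∃ n : ℕ+, T^[(n : ℕ)] x ∈ V.1 ∧ T^[(n : ℕ)] y ∈ V.1 := by
    obtain ⟨n, -, hn⟩ := stronglyProximal_iff_forall_isOpen.mp h V.1 V.2.1 V.2.2 1
    exact ⟨n, hn⟩
  choose n hn using hret
  -- Shrink `V` to the points that return to `V` at the time `n V` where `x` and `y` do.
  let shrink (V : {V : Set X // IsOpen V ∧ y ∈ V}) : {V : Set X // IsOpen V ∧ y ∈ V} :=
    ⟨V.1 ∩ T^[(n V : ℕ)] ⁻¹' V.1, V.2.1.inter (V.2.1.preimage (hT.iterate _)), V.2.2, (hn V).2⟩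
  let V (k : ℕ) := shrink^[k] ⟨U, hU, hyU⟩
  have hV (k : ℕ) : (V (k + 1)).1 ⊆ (V k).1 ∩ T^[(n (V k) : ℕ)] ⁻¹' (V k).1 := by
    simp only [V, Function.iterate_succ_apply']
    rfl
  refine isIPSet_iff_exists_nat_seq.mpr ⟨fun k => n (V k), fun β hβ => ?_⟩
  refine ⟨⟨_, sum_pos (fun i _ => (n (V i)).pos) hβ⟩, ⟨?_, ?_⟩, rfl⟩
  · exact iterate_sum_mem (V := fun k => (V k).1) hV (fun k => (hn (V k)).1) hβ
  · exact iterate_sum_mem (V := fun k => (V k).1) hV (fun k => (hn (V k)).2) hβ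

theorem stronglyProximal_iterate_of_isIPSet
    (h : ∀ U : Set X, IsOpen U → y ∈ U →
      IsIPSet {n : ℕ+ | T^[(n : ℕ)] x ∈ U ∧ T^[(n : ℕ)] y ∈ U}) (k : ℕ+) :
    StronglyProximal T^[(k : ℕ)] x y := by
  refine stronglyProximal_iff_forall_isOpen.mpr fun U hU hyU m => ?_
  obtain ⟨c, hmc, hc⟩ := (h U hU hyU).exists_mul_mem k m
  simp only [Set.mem_ofPred_eq, PNat.mul_coe, Function.iterate_mul] at hc
  exact ⟨c, hmc, hc⟩

theorem StronglyProximal.of_iterate (h : ∀ k : ℕ+, StronglyProximal T^[(k : ℕ)] x y) :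
    StronglyProximal T x y := by
  simpa only [PNat.one_coe, Function.iterate_one] using h 1

end StronglyProximal

theorem strongly_proximal_iff_ip_general
    {X : Type*} [TopologicalSpace X]
    (T : X → X) (hT : Continuous T) (x y : X) :
    (StronglyProximal T x y ↔
      ∀ U : Set X, IsOpen U → y ∈ U →
        IsIPSet {n : ℕ+ | T^[(n : ℕ)] x ∈ U ∧ T^[(n : ℕ)] y ∈ U}) ∧
    (StronglyProximal T x y ↔
      ∀ k : ℕ+, StronglyProximal (T^[(k : ℕ)]) x y) := by
  have h12 (h : StronglyProximal T x y) U (hU : IsOpen U) (hyU : y ∈ U) :=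
    h.isIPSet hT hU hyU
  exact ⟨⟨h12, fun h => .of_iterate (stronglyProximal_iterate_of_isIPSet h)⟩,
    ⟨fun h => stronglyProximal_iterate_of_isIPSet (h12 h), .of_iterate⟩⟩

/-- For a dynamical system `(X, T)` and `x, y ∈ X`, the following are equivalent:
(1) `x` is strongly proximal to `y`; (2) `{n | T^n x ∈ U ∧ T^n y ∈ U}` is an IP set
for every open neighborhood `U` of `y`; (3) for every `k ∈ ℕ₊`, `x` is strongly
proximal to `y` in `(X, T^k)`. -/
theorem strongly_proximal_iff_ip
    {X : Type*} [TopologicalSpace X] [CompactSpace X] [T2Space X] [Nonempty X]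
    (T : X → X) (hT : Continuous T) (x y : X) :
    (StronglyProximal T x y ↔
      ∀ U : Set X, IsOpen U → y ∈ U →
        IsIPSet {n : ℕ+ | T^[(n : ℕ)] x ∈ U ∧ T^[(n : ℕ)] y ∈ U}) ∧
    (StronglyProximal T x y ↔
      ∀ k : ℕ+, StronglyProximal (T^[(k : ℕ)]) x y) :=
  strongly_proximal_iff_ip_general T hT x y
end

section
/- Let 𝓕 be a filterdual such that h(𝓕) is closed under the addition of ultrafilters, let (X,T) be a dynamical system and x, y ∈ X. The following are equivalent: (1) x is 𝓕-strongly proximal to y; (2) there exists an idempotent ultrafilter u ∈ h(𝓕) such that for every open neighborhood U of y both {n ∈ ℕ : T^n x ∈ U} ∈ u and {n ∈ ℕ : T^n y ∈ U} ∈ u; (3) for every open neighborhood U of y the set {n ∈ ℕ : T^n x ∈ U and T^n y ∈ U} is an essential 𝓕-set. -/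
open Finset

attribute [local instance] Ultrafilter.add Ultrafilter.addSemigroup
lemma mem_add_iff' (p q : Ultrafilter ℕ+) (A : Set ℕ+) :
    A ∈ p + q ↔ {n : ℕ+ | {m : ℕ+ | n + m ∈ A} ∈ q} ∈ p := Iff.rfl

lemma umono (u : Ultrafilter ℕ+) {A B : Set ℕ+} (h : A ∈ u) (hsub : A ⊆ B) : B ∈ u :=
  Filter.mem_of_superset h hsub

lemma exists_hull_ultrafilter (F : Set (Set ℕ+)) (hfd : IsFilterdual F)
    (𝒜 : Set (Set ℕ+)) (h𝒜F : ∀ A ∈ 𝒜, A ∈ F) (h𝒜univ : Set.univ ∈ 𝒜)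
    (h𝒜int : ∀ A ∈ 𝒜, ∀ B ∈ 𝒜, A ∩ B ∈ 𝒜) :
    ∃ u : Ultrafilter ℕ+, InHull F u ∧ ∀ A ∈ 𝒜, A ∈ u := by
  obtain ⟨hmono, -, hproper, hram⟩ := hfd
  have hempty : ∅ ∉ F := fun h =>
    hproper (Set.eq_univ_of_forall fun A => hmono (Set.empty_subset A) h)
  let G : Filter ℕ+ :=
    { sets := {S | ∃ B, Bᶜ ∉ F ∧ ∃ A ∈ 𝒜, B ∩ A ⊆ S}
      univ_sets := ⟨Set.univ, by simpa using hempty, Set.univ, h𝒜univ, by simp⟩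
      sets_of_superset := by
        rintro S T ⟨B, hB, A, hA, hsub⟩ hST
        exact ⟨B, hB, A, hA, hsub.trans hST⟩
      inter_sets := by
        rintro S T ⟨B₁, hB₁, A₁, hA₁, h₁⟩ ⟨B₂, hB₂, A₂, hA₂, h₂⟩
        refine ⟨B₁ ∩ B₂, ?_, A₁ ∩ A₂, h𝒜int _ hA₁ _ hA₂, ?_⟩
        · rw [Set.compl_inter]
          intro h
          rcases hram _ _ h with h | h
          exacts [hB₁ h, hB₂ h]
        · intro n hn
          exact ⟨h₁ ⟨hn.1.1, hn.2.1⟩, h₂ ⟨hn.1.2, hn.2.2⟩⟩ }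
  have hGmem : ∀ S : Set ℕ+, S ∈ G ↔ ∃ B, Bᶜ ∉ F ∧ ∃ A ∈ 𝒜, B ∩ A ⊆ S := fun _ => Iff.rfl
  have hGne : G.NeBot := by
    refine ⟨fun h => ?_⟩
    have hbot : (∅ : Set ℕ+) ∈ G := by rw [h]; exact Filter.mem_bot
    obtain ⟨B, hB, A, hA, hsub⟩ := (hGmem ∅).1 hbot
    refine hB (hmono (fun n hn => ?_) (h𝒜F A hA))
    intro hnB
    exact hsub ⟨hnB, hn⟩
  obtain ⟨u, hu⟩ := Ultrafilter.exists_le G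
  refine ⟨u, ?_, ?_⟩
  · intro S hS
    by_contra hSF
    have hSc : Sᶜ ∈ G := (hGmem Sᶜ).2 ⟨Sᶜ, by rwa [compl_compl], Set.univ, h𝒜univ,
      Set.inter_subset_left⟩
    exact (Ultrafilter.compl_mem_iff_notMem.1 (hu hSc)) hS
  · intro A hA
    exact hu ((hGmem A).2 ⟨Set.univ, by simpa using hempty, A, hA, Set.inter_subset_right⟩)



/-- For a filterdual `F` whose hull is closed under addition of ultrafilters, a system
`(X, T)` and `x, y ∈ X`, the following are equivalent: (1) `x` is `F`-strongly proximal
to `y`; (2) there is an idempotent `u ∈ h(F)` with `N(x, U) ∈ u` and `N(y, U) ∈ u` for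
every open neighborhood `U` of `y`; (3) `{n | T^n x ∈ U ∧ T^n y ∈ U}` is an essential
`F`-set for every open neighborhood `U` of `y`. -/
theorem fstrongly_proximal_iff_idempotent (F : Set (Set ℕ+))
    (hfd : IsFilterdual F) (hadd : HullAddClosed F)
    {X : Type*} [TopologicalSpace X] [CompactSpace X] [T2Space X] [Nonempty X]
    (T : X → X) (hT : Continuous T) (x y : X) :
    (FStronglyProximal F T x y ↔
      ∃ u : Ultrafilter ℕ+, IsIdempotentUF u ∧ InHull F u ∧
        ∀ U : Set X, IsOpen U → y ∈ U →
          {n : ℕ+ | T^[(n : ℕ)] x ∈ U} ∈ u ∧ {n : ℕ+ | T^[(n : ℕ)] y ∈ U} ∈ u) ∧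
    (FStronglyProximal F T x y ↔
      ∀ U : Set X, IsOpen U → y ∈ U →
        IsEssentialSet F {n : ℕ+ | T^[(n : ℕ)] x ∈ U ∧ T^[(n : ℕ)] y ∈ U}) := by
  have key : FStronglyProximal F T x y →
      ∃ u : Ultrafilter ℕ+, IsIdempotentUF u ∧ InHull F u ∧
        ∀ U : Set X, IsOpen U → y ∈ U →
          {n : ℕ+ | T^[(n : ℕ)] x ∈ U} ∈ u ∧ {n : ℕ+ | T^[(n : ℕ)] y ∈ U} ∈ u := by
    intro hsp
    set s : Set (Ultrafilter ℕ+) := {u | InHull F u ∧ ∀ U : Set X, IsOpen U → y ∈ U →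
        {n : ℕ+ | T^[(n : ℕ)] x ∈ U} ∈ u ∧ {n : ℕ+ | T^[(n : ℕ)] y ∈ U} ∈ u} with hs
    -- nonempty
    have s_ne : s.Nonempty := by
      set 𝒜 : Set (Set ℕ+) := {A | ∃ U : Set X, IsOpen U ∧ y ∈ U ∧
        A = {n : ℕ+ | T^[(n : ℕ)] x ∈ U ∧ T^[(n : ℕ)] y ∈ U}} with h𝒜
      obtain ⟨u, huH, huA⟩ := exists_hull_ultrafilter F hfd 𝒜
        (by rintro A ⟨U, hU, hyU, rfl⟩; exact hsp U hU hyU)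
        (⟨Set.univ, isOpen_univ, trivial, by ext n; simp⟩)
        (by
          rintro A ⟨U, hU, hyU, rfl⟩ B ⟨V, hV, hyV, rfl⟩
          exact ⟨U ∩ V, hU.inter hV, ⟨hyU, hyV⟩, by ext n; simp; tauto⟩)
      refine ⟨u, huH, fun U hU hyU => ?_⟩
      have hAU := huA _ ⟨U, hU, hyU, rfl⟩
      exact ⟨umono u hAU fun n hn => hn.1, umono u hAU fun n hn => hn.2⟩
    -- closed, hence compact
    have s_closed : IsClosed s := by
      have h1 : IsClosed {u : Ultrafilter ℕ+ | InHull F u} := by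
        have : {u : Ultrafilter ℕ+ | InHull F u} =
            ⋂ (A : Set ℕ+) (_ : A ∉ F), {u : Ultrafilter ℕ+ | Aᶜ ∈ u} := by
          ext u
          simp only [Set.mem_iInter, Set.mem_setOf_eq]
          constructor
          · intro h A hA
            exact Ultrafilter.compl_mem_iff_notMem.2 fun hmem => hA (h A hmem)
          · intro h A hA
            by_contra hF
            exact (Ultrafilter.compl_mem_iff_notMem.1 (h A hF)) hA
        rw [this]
        exact isClosed_iInter fun A => isClosed_iInter fun _ => ultrafilter_isClosed_basic _
      have h2 : IsClosed {u : Ultrafilter ℕ+ | ∀ U : Set X, IsOpen U → y ∈ U →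
          {n : ℕ+ | T^[(n : ℕ)] x ∈ U} ∈ u ∧ {n : ℕ+ | T^[(n : ℕ)] y ∈ U} ∈ u} := by
        have : {u : Ultrafilter ℕ+ | ∀ U : Set X, IsOpen U → y ∈ U →
            {n : ℕ+ | T^[(n : ℕ)] x ∈ U} ∈ u ∧ {n : ℕ+ | T^[(n : ℕ)] y ∈ U} ∈ u} =
            ⋂ (U : Set X) (_ : IsOpen U) (_ : y ∈ U),
              ({u : Ultrafilter ℕ+ | {n : ℕ+ | T^[(n : ℕ)] x ∈ U} ∈ u} ∩
               {u : Ultrafilter ℕ+ | {n : ℕ+ | T^[(n : ℕ)] y ∈ U} ∈ u}) := by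
          ext u
          simp only [Set.mem_iInter, Set.mem_inter_iff, Set.mem_setOf_eq]
        rw [this]
        exact isClosed_iInter fun U => isClosed_iInter fun _ => isClosed_iInter fun _ =>
          (ultrafilter_isClosed_basic _).inter (ultrafilter_isClosed_basic _)
      exact h1.inter h2
    have s_compact : IsCompact s := s_closed.isCompact
    -- subsemigroup
    have s_add : ∀ u ∈ s, ∀ v ∈ s, u + v ∈ s := by
      rintro u ⟨huH, huN⟩ v ⟨hvH, hvN⟩
      refine ⟨fun A hA => hadd u v huH hvH A ((mem_add_iff' u v A).1 hA), fun U hU hyU => ?_⟩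
      constructor
      · refine (mem_add_iff' u v _).2 (umono u (huN U hU hyU).2 fun n hn => ?_)
        have hV : IsOpen (T^[(n : ℕ)] ⁻¹' U) := (hT.iterate (n : ℕ)).isOpen_preimage U hU
        have := (hvN _ hV hn).1
        have heq : {m : ℕ+ | T^[(m : ℕ)] x ∈ T^[(n : ℕ)] ⁻¹' U} =
            {m : ℕ+ | n + m ∈ {k : ℕ+ | T^[(k : ℕ)] x ∈ U}} := by
          ext m
          simp [Set.mem_preimage, PNat.add_coe, Function.iterate_add_apply]
        rw [heq] at this
        exact this
      · refine (mem_add_iff' u v _).2 (umono u (huN U hU hyU).2 fun n hn => ?_)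
        have hV : IsOpen (T^[(n : ℕ)] ⁻¹' U) := (hT.iterate (n : ℕ)).isOpen_preimage U hU
        have := (hvN _ hV hn).2
        have heq : {m : ℕ+ | T^[(m : ℕ)] y ∈ T^[(n : ℕ)] ⁻¹' U} =
            {m : ℕ+ | n + m ∈ {k : ℕ+ | T^[(k : ℕ)] y ∈ U}} := by
          ext m
          simp [Set.mem_preimage, PNat.add_coe, Function.iterate_add_apply]
        rw [heq] at this
        exact this
    obtain ⟨u, hus, huu⟩ := exists_idempotent_in_compact_add_subsemigroup
      Ultrafilter.continuous_add_left s s_ne s_compact s_add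
    refine ⟨u, fun A => ?_, hus.1, hus.2⟩
    have := mem_add_iff' u u A
    rw [huu] at this
    exact this.symm
  constructor
  · constructor
    · exact key
    · rintro ⟨u, _, hHull, hN⟩ U hU hyU
      refine hHull _ ?_
      rw [Set.setOf_and]
      exact Filter.inter_mem (hN U hU hyU).1 (hN U hU hyU).2
  · constructor
    · intro hsp U hU hyU
      obtain ⟨u, hidem, hHull, hN⟩ := key hsp
      refine ⟨u, hidem, hHull, ?_⟩
      rw [Set.setOf_and]
      exact Filter.inter_mem (hN U hU hyU).1 (hN U hU hyU).2
    · intro h U hU hyU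
      obtain ⟨p, -, hHull, hmem⟩ := h U hU hyU
      exact hHull _ hmem
end
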